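/- arXiv:math/0511257 — 5 statements merged into one kernel-verified Lean document; each statement's English description precedes it below -/
import Mathlib

section
/- Let a > 0 and let σ : ℝ → ℝ be bounded and continuous with σ not identically zero and a·‖σ‖_∞ < √2. Then the function λ : ℝ → ℝ defined by λ(s) := inf over φ ∈ C_c^∞((−a,a)) \ {0} of (∫_{−a}^a |φ'(t)|² h₀(s,t) dt)/(∫_{−a}^a |φ(t)|² h₀(s,t) dt) − E₁ is continuous, non-negative, and not identically equal to zero. -/
/-!
With `q := (1 + t²σ²)^(1/4)`, so that `q² = h₀`, and `ψ := q φ`, integration by parts gives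
`∫ φ'² h₀ = ∫ ψ'² + ∫ V ψ²` and `∫ φ² h₀ = ∫ ψ²`, where `V = q''/q`. The sharp Wirtinger
inequality `∫ ψ'² ≥ E₁ ∫ ψ²` on `(-a, a)` (proved by completing the square against the ground state
`cos (π t / 2a)`) and the bound `V ≥ V(a) > 0`, valid when `a²σ² < 2`, give `λ(s) ≥ V(a) ≥ 0`, with
`V(a) > 0` where `σ(s) ≠ 0`. For continuity, the weights at `s` and `s'` agree up to the factor
`√(1 + a²|σ(s)² - σ(s')²|)`, so the Rayleigh infima agree up to `1 + a²|σ(s)² - σ(s')²|`.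
-/

open MeasureTheory Real Set Filter Topology

theorem continuous_mul_of_tsupport_subset {X : Type*} [TopologicalSpace X] {f g : X → ℝ}
    {U : Set X} (hU : IsOpen U) (hf : ContinuousOn f U) (hg : Continuous g)
    (hsupp : tsupport g ⊆ U) : Continuous fun x => f x * g x :=
  continuous_of_tsupport fun _ hx =>
    (hf.continuousAt (hU.mem_nhds (hsupp (tsupport_mul_subset_right hx)))).mul hg.continuousAt

theorem support_subset_tsupport_of_vanishing {φ g : ℝ → ℝ}
    (hg : ∀ t, φ t = 0 → deriv φ t = 0 → g t = 0) : Function.support g ⊆ tsupport φ :=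
  fun t ht => by
    by_contra h
    exact ht (hg t (image_eq_zero_of_notMem_tsupport h) (deriv_of_notMem_tsupport h))

theorem HasCompactSupport.integrable_of_vanishing {φ g : ℝ → ℝ} (hφ : HasCompactSupport φ)
    (hg : Continuous g) (hvan : ∀ t, φ t = 0 → deriv φ t = 0 → g t = 0) : Integrable g :=
  hg.integrable_of_hasCompactSupport (hφ.mono' (support_subset_tsupport_of_vanishing hvan))

theorem hasCompactSupport_of_tsupport_subset_Ioo {f : ℝ → ℝ} {l r : ℝ}
    (h : tsupport f ⊆ Ioo l r) : HasCompactSupport f :=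
  Metric.isCompact_of_isClosed_isBounded (isClosed_tsupport f)
    ((Metric.isBounded_Ioo l r).subset h)

/-- `T` may be singular off `U`; `T ψ²` is still differentiable because `ψ` vanishes near `Uᶜ`. -/
theorem hasDerivAt_mul_sq_of_tsupport_subset {U : Set ℝ} {T T' ψ : ℝ → ℝ}
    (hT : ∀ t ∈ U, HasDerivAt T (T' t) t) (hψ : Differentiable ℝ ψ) (hsupp : tsupport ψ ⊆ U)
    (t : ℝ) :
    HasDerivAt (fun t => T t * ψ t ^ 2) (T t * (2 * ψ t * deriv ψ t) + T' t * ψ t ^ 2) t := by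
  simpa using (ContinuousLinearMap.mul ℝ ℝ).hasDerivAt_of_bilinear (u := T)
    (v := fun t => ψ t ^ 2) (u' := T' t) (v' := 2 * ψ t * deriv ψ t)
    (fun h => hT t (hsupp (closure_mono (fun s hs => by simpa using hs) h)))
    (fun _ => ((hψ t).hasDerivAt.fun_pow 2).congr_deriv (by push_cast; ring))

theorem integral_deriv_mul_sq_eq_zero {U : Set ℝ} {T T' ψ : ℝ → ℝ} (hU : IsOpen U)
    (hT : ∀ t ∈ U, HasDerivAt T (T' t) t) (hT' : ContinuousOn T' U) (hψ : ContDiff ℝ 1 ψ)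
    (hψc : HasCompactSupport ψ) (hsupp : tsupport ψ ⊆ U) :
    Integrable (fun t => T t * (2 * ψ t * deriv ψ t) + T' t * ψ t ^ 2) ∧
      ∫ t, (T t * (2 * ψ t * deriv ψ t) + T' t * ψ t ^ 2) = 0 := by
  have hTc : ContinuousOn T U := fun t ht => (hT t ht).continuousAt.continuousWithinAt
  have hsub : ∀ g : ℝ → ℝ, (∀ t, ψ t = 0 → deriv ψ t = 0 → g t = 0) → tsupport g ⊆ U :=
    fun _ hg =>
      (closure_minimal (support_subset_tsupport_of_vanishing hg) (isClosed_tsupport ψ)).trans hsupp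
  have hsq : tsupport (fun t => ψ t ^ 2) ⊆ U := hsub _ fun t h _ => by simp [h]
  have hint : Integrable fun t => T t * (2 * ψ t * deriv ψ t) + T' t * ψ t ^ 2 :=
    hψc.integrable_of_vanishing
      ((continuous_mul_of_tsupport_subset hU hTc (by fun_prop)
        (hsub _ fun t h _ => by simp [h])).add
        (continuous_mul_of_tsupport_subset hU hT' (by fun_prop) hsq))
      fun t h h' => by simp [h, h']
  refine ⟨hint, integral_eq_zero_of_hasDerivAt_of_integrable
    (hasDerivAt_mul_sq_of_tsupport_subset hT (hψ.differentiable one_ne_zero) hsupp) hint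
    (hψc.integrable_of_vanishing (continuous_mul_of_tsupport_subset hU hTc (by fun_prop) hsq)
      fun t h _ => by simp [h])⟩

theorem wirtinger_inequality_Ioo {l r : ℝ} {ψ : ℝ → ℝ} (hψ : ContDiff ℝ 1 ψ)
    (hsupp : tsupport ψ ⊆ Ioo l r) :
    (π / (r - l)) ^ 2 * ∫ t, ψ t ^ 2 ≤ ∫ t, deriv ψ t ^ 2 := by
  set k := π / (r - l)
  -- `-k T` is the logarithmic derivative of the ground state `cos (k (t - (l + r) / 2))`
  set T : ℝ → ℝ := fun t => tan (k * (t - (l + r) / 2))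
  have hψc := hasCompactSupport_of_tsupport_subset_Ioo hsupp
  have hcos : ∀ t ∈ Ioo l r, cos (k * (t - (l + r) / 2)) ≠ 0 := by
    intro t ht
    have hlr : 0 < r - l := by linarith [ht.1, ht.2]
    refine (cos_pos_of_mem_Ioo ⟨?_, ?_⟩).ne'
    · rw [div_mul_eq_mul_div, lt_div_iff₀ hlr]; nlinarith [pi_pos, ht.1, ht.2]
    · rw [div_mul_eq_mul_div, div_lt_iff₀ hlr]; nlinarith [pi_pos, ht.1, ht.2]
  have hT : ∀ t ∈ Ioo l r, HasDerivAt T (k * (1 + T t ^ 2)) t := by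
    intro t ht
    have h := (hasDerivAt_tan (hcos t ht)).comp t
      (((hasDerivAt_id t).sub_const ((l + r) / 2)).const_mul k)
    refine h.congr_deriv ?_
    rw [one_div, ← inv_one_add_tan_sq (hcos t ht), inv_inv]
    ring
  have hTc : ContinuousOn T (Ioo l r) := fun t ht => (hT t ht).continuousAt.continuousWithinAt
  have hT' : ContinuousOn (fun t => k * (1 + T t ^ 2)) (Ioo l r) :=
    continuousOn_const.mul (continuousOn_const.add (hTc.pow 2))
  obtain ⟨hF'int, hF'zero⟩ := integral_deriv_mul_sq_eq_zero isOpen_Ioo hT hT' hψ hψc hsupp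
  set F' := fun t => T t * (2 * ψ t * deriv ψ t) + k * (1 + T t ^ 2) * ψ t ^ 2
  have hψsq : Integrable fun t => ψ t ^ 2 :=
    hψc.integrable_of_vanishing (by fun_prop) fun t h _ => by simp [h]
  -- completing the square: `ψ'² = k²ψ² + (ψ' + kTψ)² - kF'`
  have hpt : ∀ t, k ^ 2 * ψ t ^ 2 - k * F' t ≤ deriv ψ t ^ 2 := fun t => by
    nlinarith [sq_nonneg (deriv ψ t + k * T t * ψ t)]
  calc k ^ 2 * ∫ t, ψ t ^ 2 = ∫ t, (k ^ 2 * ψ t ^ 2 - k * F' t) := by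
        rw [integral_sub (hψsq.const_mul _) (hF'int.const_mul _), integral_const_mul,
          integral_const_mul, hF'zero, mul_zero, sub_zero]
    _ ≤ ∫ t, deriv ψ t ^ 2 :=
        integral_mono ((hψsq.const_mul _).sub (hF'int.const_mul _))
          (hψc.integrable_of_vanishing (by fun_prop) fun t _ h' => by simp [h']) hpt

theorem integral_deriv_mul_sq_eq {q φ : ℝ → ℝ} (hq : ContDiff ℝ 2 q) (hφ : ContDiff ℝ 1 φ)
    (hφc : HasCompactSupport φ) :
    ∫ t, deriv (fun t => q t * φ t) t ^ 2 =
      (∫ t, q t ^ 2 * deriv φ t ^ 2) - ∫ t, q t * deriv (deriv q) t * φ t ^ 2 := by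
  have hq' : ContDiff ℝ 1 (deriv q) := hq.iterate_deriv' 1 1
  have hqd : Differentiable ℝ q := hq.differentiable (by norm_num)
  have hq'd : Differentiable ℝ (deriv q) := hq'.differentiable one_ne_zero
  have hφd : Differentiable ℝ φ := hφ.differentiable one_ne_zero
  obtain ⟨hF'int, hF'zero⟩ := integral_deriv_mul_sq_eq_zero isOpen_univ
    (T := fun t => q t * deriv q t) (T' := fun t => deriv q t ^ 2 + q t * deriv (deriv q) t)
    (fun t _ => ((hqd t).hasDerivAt.mul (hq'd t).hasDerivAt).congr_deriv (by ring))
    (Continuous.continuousOn (by fun_prop)) hφ hφc (subset_univ _)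
  have hA : Integrable fun t => q t ^ 2 * deriv φ t ^ 2 :=
    hφc.integrable_of_vanishing (by fun_prop) fun t _ h' => by simp [h']
  have hB : Integrable fun t => q t * deriv (deriv q) t * φ t ^ 2 :=
    hφc.integrable_of_vanishing (by fun_prop) fun t h _ => by simp [h]
  have hpt : ∀ t, deriv (fun t => q t * φ t) t ^ 2 =
      q t ^ 2 * deriv φ t ^ 2 - q t * deriv (deriv q) t * φ t ^ 2 +
        (q t * deriv q t * (2 * φ t * deriv φ t) +
          (deriv q t ^ 2 + q t * deriv (deriv q) t) * φ t ^ 2) := fun t => by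
    rw [deriv_fun_mul (hqd t) (hφd t)]; ring
  simp_rw [hpt]
  rw [integral_add (f := fun t => _ - _) (hA.sub hB) hF'int, hF'zero, add_zero]
  exact integral_sub hA hB

noncomputable def weightRoot (b t : ℝ) : ℝ := (1 + t ^ 2 * b ^ 2) ^ (4⁻¹ : ℝ)

noncomputable def effectivePotential (b t : ℝ) : ℝ :=
  b ^ 2 * (2 - t ^ 2 * b ^ 2) / (4 * (1 + t ^ 2 * b ^ 2) ^ 2)

theorem weightRoot_sq (b t : ℝ) : weightRoot b t ^ 2 = √(1 + t ^ 2 * b ^ 2) := by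
  rw [weightRoot, ← rpow_natCast, ← rpow_mul (by positivity), sqrt_eq_rpow]
  norm_num

theorem contDiff_weightRoot (b : ℝ) : ContDiff ℝ 2 (weightRoot b) :=
  contDiff_iff_contDiffAt.2 fun t =>
    (by fun_prop : ContDiffAt ℝ 2 (fun t : ℝ => 1 + t ^ 2 * b ^ 2) t).rpow_const_of_ne
      (by positivity)

theorem hasDerivAt_weightRoot (b t : ℝ) :
    HasDerivAt (weightRoot b) (weightRoot b t * (t * b ^ 2 / (2 * (1 + t ^ 2 * b ^ 2)))) t := by
  have hu : (1 + t ^ 2 * b ^ 2) ≠ 0 := by positivity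
  have h := (((hasDerivAt_pow 2 t).mul_const (b ^ 2)).const_add 1).rpow_const
    (p := (4⁻¹ : ℝ)) (Or.inl hu)
  refine h.congr_deriv ?_
  rw [rpow_sub_one hu, weightRoot]
  field_simp
  push_cast
  ring

theorem deriv_weightRoot (b : ℝ) :
    deriv (weightRoot b) = fun t => weightRoot b t * (t * b ^ 2 / (2 * (1 + t ^ 2 * b ^ 2))) :=
  funext fun t => (hasDerivAt_weightRoot b t).deriv

theorem deriv_deriv_weightRoot (b t : ℝ) :
    deriv (deriv (weightRoot b)) t = weightRoot b t * effectivePotential b t := by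
  have hu : (1 + t ^ 2 * b ^ 2) ≠ 0 := by positivity
  have hlog : HasDerivAt (fun t : ℝ => t * b ^ 2 / (2 * (1 + t ^ 2 * b ^ 2)))
      ((b ^ 2 * (2 * (1 + t ^ 2 * b ^ 2)) - t * b ^ 2 * (2 * (2 * t * b ^ 2))) /
        (2 * (1 + t ^ 2 * b ^ 2)) ^ 2) t := by
    have h := ((hasDerivAt_id t).mul_const (b ^ 2)).div
      ((((hasDerivAt_pow 2 t).mul_const (b ^ 2)).const_add 1).const_mul 2) (by positivity)
    refine h.congr_deriv ?_
    simp only [id, Nat.cast_ofNat]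
    ring
  rw [deriv_weightRoot, ((hasDerivAt_weightRoot b t).fun_mul hlog).deriv, effectivePotential]
  field_simp
  ring

theorem effectivePotential_le {a b t : ℝ} (hb : a ^ 2 * b ^ 2 ≤ 2) (ht : t ^ 2 ≤ a ^ 2) :
    effectivePotential b a ≤ effectivePotential b t := by
  have hx : t ^ 2 * b ^ 2 ≤ a ^ 2 * b ^ 2 := by gcongr
  have hx0 : 0 ≤ t ^ 2 * b ^ 2 := by positivity
  unfold effectivePotential
  rw [div_le_div_iff₀ (by positivity) (by positivity)]
  -- `(2 - x) / (1 + x)²` is decreasing for `0 ≤ x ≤ 5`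
  have key : 0 ≤ (a ^ 2 * b ^ 2 - t ^ 2 * b ^ 2) *
      (5 + 2 * (t ^ 2 * b ^ 2 + a ^ 2 * b ^ 2) - t ^ 2 * b ^ 2 * (a ^ 2 * b ^ 2)) :=
    mul_nonneg (by linarith) (by nlinarith)
  nlinarith [mul_nonneg (sq_nonneg b) key]

theorem effectivePotential_nonneg {a b : ℝ} (hb : a ^ 2 * b ^ 2 ≤ 2) :
    0 ≤ effectivePotential b a := by
  unfold effectivePotential
  have : 0 ≤ 2 - a ^ 2 * b ^ 2 := by linarith
  positivity

theorem effectivePotential_pos {a b : ℝ} (hb : a ^ 2 * b ^ 2 < 2) (hb0 : b ≠ 0) :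
    0 < effectivePotential b a := by
  unfold effectivePotential
  have : 0 < 2 - a ^ 2 * b ^ 2 := by linarith
  positivity

theorem weighted_poincare_Ioo {a b : ℝ} {φ : ℝ → ℝ} (hb : a ^ 2 * b ^ 2 ≤ 2)
    (hφ : ContDiff ℝ 1 φ) (hsupp : tsupport φ ⊆ Ioo (-a) a) :
    (π ^ 2 / (2 * a) ^ 2 + effectivePotential b a) *
        ∫ t in Ioo (-a) a, φ t ^ 2 * √(1 + t ^ 2 * b ^ 2) ≤
      ∫ t in Ioo (-a) a, deriv φ t ^ 2 * √(1 + t ^ 2 * b ^ 2) := by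
  set q := weightRoot b
  have hφc := hasCompactSupport_of_tsupport_subset_Ioo hsupp
  have hq : ContDiff ℝ 2 q := contDiff_weightRoot b
  have hzero : ∀ t ∉ Ioo (-a) a, φ t = 0 ∧ deriv φ t = 0 := fun t ht =>
    ⟨image_eq_zero_of_notMem_tsupport (mt (@hsupp t) ht),
      deriv_of_notMem_tsupport (mt (@hsupp t) ht)⟩
  have hden : ∫ t in Ioo (-a) a, φ t ^ 2 * √(1 + t ^ 2 * b ^ 2) = ∫ t, (q t * φ t) ^ 2 := by
    rw [setIntegral_eq_integral_of_forall_compl_eq_zero fun t ht => by simp [(hzero t ht).1]]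
    congr 1 with t
    rw [← weightRoot_sq]; ring
  have hnum : ∫ t in Ioo (-a) a, deriv φ t ^ 2 * √(1 + t ^ 2 * b ^ 2) =
      ∫ t, q t ^ 2 * deriv φ t ^ 2 := by
    rw [setIntegral_eq_integral_of_forall_compl_eq_zero fun t ht => by simp [(hzero t ht).2]]
    congr 1 with t
    rw [← weightRoot_sq]; ring
  have hwirt := wirtinger_inequality_Ioo (hq.of_le one_le_two |>.mul hφ)
    ((tsupport_mul_subset_right).trans hsupp)
  rw [integral_deriv_mul_sq_eq hq hφ hφc, show a - -a = 2 * a by ring, div_pow] at hwirt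
  have hpot : effectivePotential b a * ∫ t, (q t * φ t) ^ 2 ≤
      ∫ t, q t * deriv (deriv q) t * φ t ^ 2 := by
    rw [← integral_const_mul]
    refine integral_mono (hφc.integrable_of_vanishing (by fun_prop) fun t h _ => by simp [h])
      (hφc.integrable_of_vanishing (by fun_prop) fun t h _ => by simp [h]) fun t => ?_
    by_cases ht : t ∈ Ioo (-a) a
    · have ht2 : t ^ 2 ≤ a ^ 2 := by nlinarith [ht.1, ht.2]
      rw [deriv_deriv_weightRoot]
      nlinarith [effectivePotential_le hb ht2, sq_nonneg (q t * φ t)]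
    · simp [(hzero t ht).1]
  rw [hden, hnum]
  linarith

def IsTestFunction (U : Set ℝ) (φ : ℝ → ℝ) : Prop :=
  ContDiff ℝ (⊤ : ℕ∞) φ ∧ HasCompactSupport φ ∧ tsupport φ ⊆ U ∧ φ ≠ 0

noncomputable def rayleighQuotient (U : Set ℝ) (w φ : ℝ → ℝ) : ℝ :=
  (∫ t in U, deriv φ t ^ 2 * w t) / ∫ t in U, φ t ^ 2 * w t

-- `λ(s) = rayleighInf (Ioo (-a) a) h₀(s, ·) - E₁` holds by definition.
noncomputable def rayleighInf (U : Set ℝ) (w : ℝ → ℝ) : ℝ :=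
  sInf {r : ℝ | ∃ φ : ℝ → ℝ, ContDiff ℝ (⊤ : ℕ∞) φ ∧ HasCompactSupport φ ∧
    tsupport φ ⊆ U ∧ φ ≠ 0 ∧ r = rayleighQuotient U w φ}

theorem rayleighQuotient_nonneg {U : Set ℝ} {w : ℝ → ℝ} (φ : ℝ → ℝ) (hw : ∀ t, 0 ≤ w t) :
    0 ≤ rayleighQuotient U w φ :=
  div_nonneg (integral_nonneg fun t => mul_nonneg (sq_nonneg _) (hw t))
    (integral_nonneg fun t => mul_nonneg (sq_nonneg _) (hw t))

namespace IsTestFunction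

variable {U : Set ℝ} {φ : ℝ → ℝ}

theorem rayleighQuotient_mem (hφ : IsTestFunction U φ) (w : ℝ → ℝ) :
    rayleighQuotient U w φ ∈ {r : ℝ | ∃ φ : ℝ → ℝ, ContDiff ℝ (⊤ : ℕ∞) φ ∧
      HasCompactSupport φ ∧ tsupport φ ⊆ U ∧ φ ≠ 0 ∧ r = rayleighQuotient U w φ} :=
  ⟨φ, hφ.1, hφ.2.1, hφ.2.2.1, hφ.2.2.2, rfl⟩

theorem integrable_sq_mul (hφ : IsTestFunction U φ) {w : ℝ → ℝ} (hw : Continuous w) :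
    Integrable fun t => φ t ^ 2 * w t :=
  (hφ.1.continuous.pow 2 |>.mul hw).integrable_of_hasCompactSupport
    (hφ.2.1.mono fun t ht h => ht (by simp [h]))

theorem integrable_deriv_sq_mul (hφ : IsTestFunction U φ) {w : ℝ → ℝ} (hw : Continuous w) :
    Integrable fun t => deriv φ t ^ 2 * w t :=
  ((hφ.1.continuous_deriv (by simp)).pow 2 |>.mul hw).integrable_of_hasCompactSupport
    (hφ.2.1.mono' fun t ht => support_deriv_subset fun h => left_ne_zero_of_mul ht (by simp [h]))

theorem setIntegral_sq_mul_pos (hφ : IsTestFunction U φ) {w : ℝ → ℝ} (hw : Continuous w)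
    (hpos : ∀ t, 0 < w t) : 0 < ∫ t in U, φ t ^ 2 * w t := by
  obtain ⟨x, hx⟩ := Function.ne_iff.1 hφ.2.2.2
  rw [setIntegral_eq_integral_of_forall_compl_eq_zero fun t ht => by
    simp [image_eq_zero_of_notMem_tsupport (mt (@hφ.2.2.1 t) ht)]]
  exact (hφ.1.continuous.pow 2 |>.mul hw).integral_pos_of_hasCompactSupport_nonneg_nonzero
    (hφ.2.1.mono fun t ht h => ht (by simp [h])) (fun t => mul_nonneg (sq_nonneg _) (hpos t).le)
    (mul_ne_zero (pow_ne_zero 2 hx) (hpos x).ne')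

theorem rayleighQuotient_le_sq_mul (hφ : IsTestFunction U φ) (hU : MeasurableSet U)
    {w₁ w₂ : ℝ → ℝ} {C : ℝ} (hw₁ : Continuous w₁) (hw₂ : Continuous w₂)
    (hpos₁ : ∀ t, 0 < w₁ t) (hpos₂ : ∀ t, 0 < w₂ t)
    (h₁₂ : ∀ t ∈ U, w₁ t ≤ C * w₂ t) (h₂₁ : ∀ t ∈ U, w₂ t ≤ C * w₁ t) :
    rayleighQuotient U w₁ φ ≤ C ^ 2 * rayleighQuotient U w₂ φ := by
  have hN : ∫ t in U, deriv φ t ^ 2 * w₁ t ≤ C * ∫ t in U, deriv φ t ^ 2 * w₂ t := by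
    rw [← integral_const_mul]
    refine setIntegral_mono_on (hφ.integrable_deriv_sq_mul hw₁).integrableOn
      ((hφ.integrable_deriv_sq_mul hw₂).const_mul C).integrableOn hU fun t ht => ?_
    nlinarith [mul_le_mul_of_nonneg_left (h₁₂ t ht) (sq_nonneg (deriv φ t))]
  have hD : ∫ t in U, φ t ^ 2 * w₂ t ≤ C * ∫ t in U, φ t ^ 2 * w₁ t := by
    rw [← integral_const_mul]
    refine setIntegral_mono_on (hφ.integrable_sq_mul hw₂).integrableOn
      ((hφ.integrable_sq_mul hw₁).const_mul C).integrableOn hU fun t ht => ?_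
    nlinarith [mul_le_mul_of_nonneg_left (h₂₁ t ht) (sq_nonneg (φ t))]
  have hD₁ := hφ.setIntegral_sq_mul_pos hw₁ hpos₁
  have hD₂ := hφ.setIntegral_sq_mul_pos hw₂ hpos₂
  have hN₂ : 0 ≤ ∫ t in U, deriv φ t ^ 2 * w₂ t :=
    integral_nonneg fun t => mul_nonneg (sq_nonneg _) (hpos₂ t).le
  have hC : 0 < C := pos_of_mul_pos_left (hD₂.trans_le hD) hD₁.le
  unfold rayleighQuotient
  rw [mul_div_assoc', div_le_div_iff₀ hD₁ hD₂]
  nlinarith [mul_le_mul_of_nonneg_left hD (mul_nonneg hC.le hN₂)]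

theorem rayleighInf_le {w : ℝ → ℝ} (hφ : IsTestFunction U φ) (hw : ∀ t, 0 ≤ w t) :
    rayleighInf U w ≤ rayleighQuotient U w φ :=
  csInf_le ⟨0, fun _ ⟨_, _, _, _, _, hr⟩ => hr ▸ rayleighQuotient_nonneg _ hw⟩
    (hφ.rayleighQuotient_mem w)

end IsTestFunction

theorem exists_isTestFunction {U : Set ℝ} (hU : IsOpen U) (hne : U.Nonempty) :
    ∃ φ, IsTestFunction U φ := by
  obtain ⟨x, hx⟩ := hne
  obtain ⟨φ, hsupp, hφc, hφ, -, hφx⟩ := exists_contDiff_tsupport_subset (n := ⊤) (hU.mem_nhds hx)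
  exact ⟨φ, hφ, hφc, hsupp, fun h => by simp [h] at hφx⟩

theorem le_rayleighInf {U : Set ℝ} {w : ℝ → ℝ} {c : ℝ} (hU : IsOpen U) (hne : U.Nonempty)
    (h : ∀ φ, IsTestFunction U φ → c ≤ rayleighQuotient U w φ) : c ≤ rayleighInf U w := by
  obtain ⟨φ, hφ⟩ := exists_isTestFunction hU hne
  exact le_csInf ⟨_, hφ.rayleighQuotient_mem w⟩
    fun _ ⟨ψ, h1, h2, h3, h4, hr⟩ => hr ▸ h ψ ⟨h1, h2, h3, h4⟩

theorem rayleighInf_le_mul {U : Set ℝ} {w₁ w₂ : ℝ → ℝ} {C : ℝ} (hU : IsOpen U)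
    (hne : U.Nonempty) (hw₁ : ∀ t, 0 ≤ w₁ t) (hC : 0 < C)
    (h : ∀ φ, IsTestFunction U φ → rayleighQuotient U w₁ φ ≤ C * rayleighQuotient U w₂ φ) :
    rayleighInf U w₁ ≤ C * rayleighInf U w₂ := by
  rw [← div_le_iff₀' hC]
  exact le_rayleighInf hU hne fun φ hφ =>
    (div_le_iff₀' hC).2 ((hφ.rayleighInf_le hw₁).trans (h φ hφ))

theorem continuous_of_le_one_add_mul_abs_sub {X : Type*} [TopologicalSpace X] {f g : X → ℝ}
    {K : ℝ} (hK : 0 ≤ K) (hg : Continuous g) (h : ∀ x y, f x ≤ (1 + K * |g x - g y|) * f y) :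
    Continuous f := by
  refine continuous_iff_continuousAt.2 fun y => ?_
  have hpos : ∀ x, 0 < 1 + K * |g x - g y| := fun x => by positivity
  have hρ : Tendsto (fun x => 1 + K * |g x - g y|) (𝓝 y) (𝓝 1) := by
    simpa using ((by fun_prop : Continuous fun x => 1 + K * |g x - g y|).tendsto y)
  refine tendsto_of_tendsto_of_tendsto_of_le_of_le
    (by simpa using (hρ.inv₀ one_ne_zero).mul_const (f y)) (by simpa using hρ.mul_const (f y))
    (fun x => ?_) (fun x => h x y)
  rw [inv_mul_le_iff₀ (hpos x), abs_sub_comm]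
  exact h y x

theorem sqrt_one_add_mul_le {a t u v : ℝ} (ht : t ^ 2 ≤ a ^ 2) (hv : 0 ≤ v) :
    √(1 + t ^ 2 * u) ≤ √(1 + a ^ 2 * |u - v|) * √(1 + t ^ 2 * v) := by
  rw [← sqrt_mul (by positivity)]
  refine sqrt_le_sqrt ?_
  have : t ^ 2 * (u - v) ≤ a ^ 2 * |u - v| :=
    (mul_le_mul_of_nonneg_left (le_abs_self _) (sq_nonneg t)).trans
      (mul_le_mul_of_nonneg_right ht (abs_nonneg _))
  nlinarith [mul_nonneg (mul_nonneg (sq_nonneg a) (abs_nonneg (u - v)))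
    (mul_nonneg (sq_nonneg t) hv)]

theorem le_rayleighInf_sqrt {a b : ℝ} (ha : 0 < a) (hb : a ^ 2 * b ^ 2 ≤ 2) :
    π ^ 2 / (2 * a) ^ 2 + effectivePotential b a ≤
      rayleighInf (Ioo (-a) a) fun t => √(1 + t ^ 2 * b ^ 2) :=
  le_rayleighInf isOpen_Ioo (nonempty_Ioo.2 (by linarith)) fun φ hφ => by
    rw [rayleighQuotient, le_div_iff₀ (hφ.setIntegral_sq_mul_pos (by fun_prop)
      fun t => sqrt_pos.2 (by positivity))]
    exact weighted_poincare_Ioo hb (hφ.1.of_le (by simp)) hφ.2.2.1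

theorem rayleighInf_sqrt_le_mul {a : ℝ} (ha : 0 < a) (b b' : ℝ) :
    (rayleighInf (Ioo (-a) a) fun t => √(1 + t ^ 2 * b ^ 2)) ≤
      (1 + a ^ 2 * |b ^ 2 - b' ^ 2|) * rayleighInf (Ioo (-a) a) fun t => √(1 + t ^ 2 * b' ^ 2) := by
  have hpos : ∀ c t : ℝ, 0 < √(1 + t ^ 2 * c ^ 2) := fun c t => sqrt_pos.2 (by positivity)
  refine rayleighInf_le_mul isOpen_Ioo (nonempty_Ioo.2 (by linarith)) (fun t => (hpos b t).le)
    (by positivity) fun φ hφ => ?_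
  rw [← sq_sqrt (by positivity : (0 : ℝ) ≤ 1 + a ^ 2 * |b ^ 2 - b' ^ 2|)]
  refine hφ.rayleighQuotient_le_sq_mul measurableSet_Ioo (by fun_prop) (by fun_prop) (hpos b)
    (hpos b') (fun t ht => ?_) fun t ht => ?_
  · exact sqrt_one_add_mul_le (by nlinarith [ht.1, ht.2]) (sq_nonneg _)
  · rw [abs_sub_comm]
    exact sqrt_one_add_mul_le (by nlinarith [ht.1, ht.2]) (sq_nonneg _)

/-- **Lemma.** The lowest-transverse-eigenvalue shift
`λ(s) = inf_{φ ∈ C_c^∞((-a,a)) \ {0}} (∫ |φ'|² h₀(s,·)) / (∫ |φ|² h₀(s,·)) - E₁`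
is continuous, non-negative, and not identically zero, provided `σ` is bounded,
continuous, not identically zero and `a ‖σ‖_∞ < √2`. -/
theorem lambda_continuous_nonneg_not_zero
    (a : ℝ) (ha : 0 < a)
    (σ : ℝ → ℝ) (hσcont : Continuous σ) (hσbdd : ∃ M, ∀ s, |σ s| ≤ M)
    (hσne : ∃ s, σ s ≠ 0)
    (hthin : a * (⨆ s, |σ s|) < Real.sqrt 2)
    (lam : ℝ → ℝ)
    (hlam : ∀ s, lam s =
      sInf {r : ℝ | ∃ φ : ℝ → ℝ, ContDiff ℝ (⊤ : ℕ∞) φ ∧ HasCompactSupport φ ∧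
        tsupport φ ⊆ Ioo (-a) a ∧ φ ≠ 0 ∧
        r = (∫ t in Ioo (-a) a, (deriv φ t) ^ 2 * Real.sqrt (1 + t ^ 2 * σ s ^ 2)) /
            (∫ t in Ioo (-a) a, (φ t) ^ 2 * Real.sqrt (1 + t ^ 2 * σ s ^ 2))}
      - π ^ 2 / (2 * a) ^ 2) :
    Continuous lam ∧ (∀ s, 0 ≤ lam s) ∧ (∃ s, lam s ≠ 0) := by
  set μ : ℝ → ℝ := fun s => rayleighInf (Ioo (-a) a) fun t => √(1 + t ^ 2 * σ s ^ 2)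
  have hlam' : ∀ s, lam s = μ s - π ^ 2 / (2 * a) ^ 2 := hlam
  have hthin' : ∀ s, a ^ 2 * σ s ^ 2 < 2 := fun s => by
    obtain ⟨M, hM⟩ := hσbdd
    have h : a * |σ s| < √2 := (mul_le_mul_of_nonneg_left
      (le_ciSup ⟨M, by rintro _ ⟨s, rfl⟩; exact hM s⟩ s) ha.le).trans_lt hthin
    have := pow_lt_pow_left₀ h (by positivity) two_ne_zero
    rwa [mul_pow, sq_abs, sq_sqrt zero_le_two] at this
  have hlow : ∀ s, effectivePotential (σ s) a ≤ lam s := fun s => by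
    rw [hlam']
    linarith [le_rayleighInf_sqrt ha (hthin' s).le]
  refine ⟨?_, fun s => (effectivePotential_nonneg (hthin' s).le).trans (hlow s), ?_⟩
  · have hμ : Continuous μ := continuous_of_le_one_add_mul_abs_sub (sq_nonneg a)
      (hσcont.pow 2) fun s s' => rayleighInf_sqrt_le_mul ha (σ s) (σ s')
    exact (hμ.sub continuous_const).congr fun s => (hlam' s).symm
  · obtain ⟨s, hs⟩ := hσne
    exact ⟨s, ((effectivePotential_pos (hthin' s) hs).trans_le (hlow s)).ne'⟩
end

section
/- Let a > 0 and let σ : ℝ → ℝ be bounded and continuous. For every fixed s ∈ ℝ, the infimum λ(s) := inf over φ ∈ C_c^∞((−a,a)) \ {0} of (∫_{−a}^a |φ'(t)|² h₀(s,t) dt)/(∫_{−a}^a |φ(t)|² h₀(s,t) dt) − E₁ equals the infimum over φ ∈ C_c^∞((−a,a)) \ {0} of (∫_{−a}^a (|φ'(t)|² − E₁|φ(t)|² + V(s,t)|φ(t)|²) dt)/(∫_{−a}^a |φ(t)|² dt), where V(s,t) := σ(s)²·(2 − t² σ(s)²)/(4 h₀(s,t)⁴). (The two infima are related by the substitution φ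 ↦ √(h₀(s,·))·φ and integration by parts.) -/
open MeasureTheory Real Set

/-!
Write `g = h₀(s,·)^{1/2} = (1 + t²σ(s)²)^{1/4}`. The substitution `ψ = g φ` is a bijection of
`C_c^∞((-a,a)) \ {0}` with `∫ φ² h₀ = ∫ ψ²`, and expanding `((ψ/g)')² g² = (ψ' - (g'/g) ψ)²` and
integrating the cross term `-(g'/g)(ψ²)'` by parts gives the ground state identity
`∫ ((ψ/g)')² g² = ∫ ψ'² + (g''/g) ψ²`. A direct computation shows `g''/g = V(s,·)`, so the two sets of
Rayleigh quotients are translates of each other by `E₁`, and so are their infima.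
-/

section GroundState

variable {g ψ : ℝ → ℝ}

theorem integral_deriv_div_sq_mul_sq (hg : ContDiff ℝ 2 g) (hg0 : ∀ t, g t ≠ 0)
    (hψ : ContDiff ℝ 1 ψ) (hψs : HasCompactSupport ψ) :
    ∫ t, deriv (ψ / g) t ^ 2 * g t ^ 2 =
      ∫ t, (deriv ψ t ^ 2 + deriv (deriv g) t / g t * ψ t ^ 2) := by
  obtain ⟨hg_diff, -, hg'⟩ := contDiff_succ_iff_deriv.mp (show ContDiff ℝ (1 + 1) g from hg)
  have hg'_diff : Differentiable ℝ (deriv g) := hg'.differentiable one_ne_zero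
  have hψ_diff : Differentiable ℝ ψ := hψ.differentiable one_ne_zero
  set F : ℝ → ℝ := fun t => deriv g t / g t * ψ t ^ 2
  set F' : ℝ → ℝ := fun t => (deriv (deriv g) t / g t - (deriv g t / g t) ^ 2) * ψ t ^ 2 +
    deriv g t / g t * (2 * ψ t * deriv ψ t)
  have hF : ∀ t, HasDerivAt F (F' t) t := by
    intro t
    refine (((hg'_diff t).hasDerivAt.div (hg_diff t).hasDerivAt (hg0 t)).mul
      ((hψ_diff t).hasDerivAt.pow 2)).congr_deriv ?_
    have := hg0 t
    simp only [Pi.div_apply, Pi.pow_apply, F']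
    field_simp
    ring
  have hpointwise : ∀ t, deriv (ψ / g) t ^ 2 * g t ^ 2 =
      deriv ψ t ^ 2 + deriv (deriv g) t / g t * ψ t ^ 2 - F' t := by
    intro t
    rw [deriv_div (hψ_diff t) (hg_diff t) (hg0 t)]
    have := hg0 t
    simp only [F']
    field_simp
    ring
  have hψ'_cont := hψ.continuous_deriv le_rfl
  have hFs : HasCompactSupport F := hψs.mono fun t ht h => ht (by simp [F, h])
  have hF_int : Integrable F :=
    (by fun_prop (disch := exact hg0 _) : Continuous F).integrable_of_hasCompactSupport hFs
  have hF'_int : Integrable F' := by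
    have hF's : HasCompactSupport F' := by
      rw [show F' = deriv F from funext fun t => (hF t).deriv.symm]
      exact hFs.deriv
    exact (by fun_prop (disch := exact hg0 _) : Continuous F').integrable_of_hasCompactSupport hF's
  have hV_int : Integrable fun t => deriv ψ t ^ 2 + deriv (deriv g) t / g t * ψ t ^ 2 := by
    refine Continuous.integrable_of_hasCompactSupport (by fun_prop (disch := exact hg0 _))
      (hψs.mono' fun t ht => ?_)
    by_contra h
    exact ht (by simp [image_eq_zero_of_notMem_tsupport h, deriv_of_notMem_tsupport h])
  rw [integral_congr_ae (Filter.Eventually.of_forall hpointwise), integral_sub hV_int hF'_int,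
    integral_eq_zero_of_hasDerivAt_of_integrable hF hF'_int hF_int, sub_zero]

end GroundState

/-- The square root of the weight `h₀(s,t) = √(1 + t²c)`, with `c = σ(s)²`. -/
noncomputable def sqrtWeight (c t : ℝ) : ℝ := (1 + t ^ 2 * c) ^ (4⁻¹ : ℝ)

section SqrtWeight

variable {c : ℝ}

theorem one_add_sq_mul_pos (hc : 0 ≤ c) (t : ℝ) : 0 < 1 + t ^ 2 * c := by positivity

theorem sqrtWeight_pos (hc : 0 ≤ c) (t : ℝ) : 0 < sqrtWeight c t :=
  rpow_pos_of_pos (one_add_sq_mul_pos hc t) _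

theorem contDiff_sqrtWeight (hc : 0 ≤ c) : ContDiff ℝ (⊤ : ℕ∞) (sqrtWeight c) :=
  (by fun_prop : ContDiff ℝ (⊤ : ℕ∞) fun t : ℝ => 1 + t ^ 2 * c).rpow_const_of_ne
    fun t => (one_add_sq_mul_pos hc t).ne'

theorem sqrtWeight_sq (hc : 0 ≤ c) (t : ℝ) : sqrtWeight c t ^ 2 = √(1 + t ^ 2 * c) := by
  rw [sqrtWeight, ← rpow_natCast, ← rpow_mul (one_add_sq_mul_pos hc t).le, sqrt_eq_rpow]
  norm_num

theorem hasDerivAt_sqrtWeight (hc : 0 ≤ c) (t : ℝ) :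
    HasDerivAt (sqrtWeight c) (c * t / (2 * (1 + t ^ 2 * c)) * sqrtWeight c t) t := by
  have hu := one_add_sq_mul_pos hc t
  have h := (((hasDerivAt_pow 2 t).mul_const c).const_add 1).rpow_const (p := 4⁻¹) (Or.inl hu.ne')
  refine h.congr_deriv ?_
  rw [sqrtWeight, rpow_sub hu, rpow_one]
  field_simp
  ring

theorem deriv_deriv_sqrtWeight_div (hc : 0 ≤ c) (t : ℝ) :
    deriv (deriv (sqrtWeight c)) t / sqrtWeight c t =
      c * (2 - t ^ 2 * c) / (4 * √(1 + t ^ 2 * c) ^ 4) := by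
  have hu := one_add_sq_mul_pos hc t
  have hq : HasDerivAt (fun t => c * t / (2 * (1 + t ^ 2 * c)))
      (c / (2 * (1 + t ^ 2 * c)) - c ^ 2 * t ^ 2 / (1 + t ^ 2 * c) ^ 2) t := by
    refine (((hasDerivAt_id t).const_mul c).div
      ((((hasDerivAt_pow 2 t).mul_const c).const_add 1).const_mul 2) (by positivity)).congr_deriv ?_
    simp only [id]
    field_simp
    ring
  have hg' : HasDerivAt (fun t => c * t / (2 * (1 + t ^ 2 * c)) * sqrtWeight c t) _ t :=
    hq.mul (hasDerivAt_sqrtWeight hc t)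
  rw [show deriv (sqrtWeight c) = _ from funext fun t => (hasDerivAt_sqrtWeight hc t).deriv,
    hg'.deriv, show √(1 + t ^ 2 * c) ^ 4 = (1 + t ^ 2 * c) ^ 2 by
      rw [show 4 = 2 * 2 by rfl, pow_mul, sq_sqrt hu.le]]
  have := (sqrtWeight_pos hc t).ne'
  field_simp
  ring

end SqrtWeight

theorem setIntegral_eq_integral_of_tsupport_subset {X E M : Type*} [MeasurableSpace X]
    [TopologicalSpace X] [NormedAddCommGroup E] [NormedSpace ℝ E] [Zero M] {μ : Measure X}
    {f : X → E} {ψ : X → M} {s : Set X}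
    (hψ : tsupport ψ ⊆ s) (hf : ∀ t ∉ tsupport ψ, f t = 0) : ∫ t in s, f t ∂μ = ∫ t, f t ∂μ :=
  setIntegral_eq_integral_of_forall_compl_eq_zero fun t ht => hf t fun h => ht (hψ h)

section Substitution

variable {c : ℝ} {ψ : ℝ → ℝ}

theorem integral_deriv_div_sqrtWeight_sq_mul_sqrt (hc : 0 ≤ c) (hψ : ContDiff ℝ 1 ψ)
    (hψs : HasCompactSupport ψ) :
    ∫ t, deriv (ψ / sqrtWeight c) t ^ 2 * √(1 + t ^ 2 * c) =
      ∫ t, (deriv ψ t ^ 2 + c * (2 - t ^ 2 * c) / (4 * √(1 + t ^ 2 * c) ^ 4) * ψ t ^ 2) := by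
  simp_rw [← deriv_deriv_sqrtWeight_div hc, ← sqrtWeight_sq hc]
  exact integral_deriv_div_sq_mul_sq
    ((contDiff_sqrtWeight hc).of_le (WithTop.coe_le_coe.mpr le_top))
    (fun t => (sqrtWeight_pos hc t).ne') hψ hψs

theorem tsupport_div_sqrtWeight_subset : tsupport (ψ / sqrtWeight c) ⊆ tsupport ψ := by
  rw [div_eq_mul_inv]
  exact tsupport_mul_subset_left

theorem div_sqrtWeight_mul (hc : 0 ≤ c) (ψ : ℝ → ℝ) : ψ / sqrtWeight c * sqrtWeight c = ψ :=
  funext fun t => div_mul_cancel₀ _ (sqrtWeight_pos hc t).ne'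

theorem mul_sqrtWeight_div (hc : 0 ≤ c) (φ : ℝ → ℝ) : φ * sqrtWeight c / sqrtWeight c = φ :=
  funext fun t => mul_div_cancel_right₀ _ (sqrtWeight_pos hc t).ne'

theorem rayleigh_div_sqrtWeight {a E : ℝ} (hc : 0 ≤ c) (hψ : ContDiff ℝ 1 ψ)
    (hψs : HasCompactSupport ψ) (hψa : tsupport ψ ⊆ Ioo (-a) a) (hψ0 : ψ ≠ 0) :
    (∫ t in Ioo (-a) a, (deriv ψ t ^ 2 - E * ψ t ^ 2 +
        c * (2 - t ^ 2 * c) / (4 * √(1 + t ^ 2 * c) ^ 4) * ψ t ^ 2)) /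
      (∫ t in Ioo (-a) a, ψ t ^ 2) =
    (∫ t in Ioo (-a) a, deriv (ψ / sqrtWeight c) t ^ 2 * √(1 + t ^ 2 * c)) /
      (∫ t in Ioo (-a) a, (ψ / sqrtWeight c) t ^ 2 * √(1 + t ^ 2 * c)) - E := by
  have hvanish : ∀ t ∉ tsupport ψ, ψ t = 0 ∧ deriv ψ t = 0 ∧ deriv (ψ / sqrtWeight c) t = 0 :=
    fun t ht => ⟨image_eq_zero_of_notMem_tsupport ht, deriv_of_notMem_tsupport ht,
      deriv_of_notMem_tsupport fun h => ht (tsupport_div_sqrtWeight_subset h)⟩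
  have hweight : ∀ t, (ψ / sqrtWeight c) t ^ 2 * √(1 + t ^ 2 * c) = ψ t ^ 2 := fun t => by
    rw [← sqrtWeight_sq hc, Pi.div_apply, div_pow,
      div_mul_cancel₀ _ (pow_pos (sqrtWeight_pos hc t) 2).ne']
  have hψ'_cont := hψ.continuous_deriv le_rfl
  have hV_int : Integrable fun t =>
      deriv ψ t ^ 2 + c * (2 - t ^ 2 * c) / (4 * √(1 + t ^ 2 * c) ^ 4) * ψ t ^ 2 := by
    refine Continuous.integrable_of_hasCompactSupport
      (by fun_prop (disch := intro t; positivity)) (hψs.mono' fun t ht => ?_)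
    by_contra h
    simp [hvanish t h] at ht
  have hψ2_s : HasCompactSupport fun t => ψ t ^ 2 := hψs.mono fun t ht h => ht (by simp [h])
  have hψ2_int : Integrable fun t => ψ t ^ 2 :=
    (hψ.continuous.pow 2).integrable_of_hasCompactSupport hψ2_s
  have hD : 0 < ∫ t, ψ t ^ 2 := by
    obtain ⟨x, hx⟩ := Function.ne_iff.mp hψ0
    exact (hψ.continuous.pow 2).integral_pos_of_hasCompactSupport_nonneg_nonzero
      hψ2_s (fun t => sq_nonneg _) (pow_ne_zero 2 hx)
  have hsplit : ∫ t, (deriv ψ t ^ 2 - E * ψ t ^ 2 +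
        c * (2 - t ^ 2 * c) / (4 * √(1 + t ^ 2 * c) ^ 4) * ψ t ^ 2) =
      (∫ t, (deriv ψ t ^ 2 + c * (2 - t ^ 2 * c) / (4 * √(1 + t ^ 2 * c) ^ 4) * ψ t ^ 2)) -
        E * ∫ t, ψ t ^ 2 := by
    rw [← integral_const_mul, ← integral_sub hV_int (hψ2_int.const_mul E)]
    congr 1 with t
    ring
  simp_rw [hweight]
  rw [setIntegral_eq_integral_of_tsupport_subset hψa (by simp +contextual [hvanish]),
    setIntegral_eq_integral_of_tsupport_subset hψa (by simp +contextual [hvanish]),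
    setIntegral_eq_integral_of_tsupport_subset hψa (by simp +contextual [hvanish]),
    integral_deriv_div_sqrtWeight_sq_mul_sqrt hc hψ hψs, hsplit, sub_div,
    mul_div_cancel_right₀ _ hD.ne']

end Substitution

def weightedRayleighQuotients (a c : ℝ) : Set ℝ :=
  {r | ∃ φ : ℝ → ℝ, ContDiff ℝ (⊤ : ℕ∞) φ ∧ HasCompactSupport φ ∧ tsupport φ ⊆ Ioo (-a) a ∧
    φ ≠ 0 ∧ r = (∫ t in Ioo (-a) a, deriv φ t ^ 2 * √(1 + t ^ 2 * c)) /
      (∫ t in Ioo (-a) a, φ t ^ 2 * √(1 + t ^ 2 * c))}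

def schrodingerRayleighQuotients (a c E : ℝ) : Set ℝ :=
  {r | ∃ φ : ℝ → ℝ, ContDiff ℝ (⊤ : ℕ∞) φ ∧ HasCompactSupport φ ∧ tsupport φ ⊆ Ioo (-a) a ∧
    φ ≠ 0 ∧ r = (∫ t in Ioo (-a) a, (deriv φ t ^ 2 - E * φ t ^ 2 +
      c * (2 - t ^ 2 * c) / (4 * √(1 + t ^ 2 * c) ^ 4) * φ t ^ 2)) /
      (∫ t in Ioo (-a) a, φ t ^ 2)}

section RayleighQuotients

variable {a c : ℝ}

theorem weightedRayleighQuotients_nonempty (ha : 0 < a) :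
    (weightedRayleighQuotients a c).Nonempty := by
  obtain ⟨φ, hφa, hφs, hφ, -, hφ0⟩ :=
    exists_contDiff_tsupport_subset (n := ⊤) (x := (0 : ℝ)) (Ioo_mem_nhds (neg_lt_zero.mpr ha) ha)
  exact ⟨_, φ, hφ, hφs, hφa, fun h => by simp [h] at hφ0, rfl⟩

theorem weightedRayleighQuotients_bddBelow : BddBelow (weightedRayleighQuotients a c) := by
  refine ⟨0, ?_⟩
  rintro _ ⟨φ, -, -, -, -, rfl⟩
  positivity

theorem image_sub_weightedRayleighQuotients (hc : 0 ≤ c) (E : ℝ) :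
    (· - E) '' weightedRayleighQuotients a c = schrodingerRayleighQuotients a c E := by
  have h1 : (1 : WithTop ℕ∞) ≤ (⊤ : ℕ∞) := WithTop.coe_le_coe.mpr le_top
  ext r
  constructor
  · rintro ⟨_, ⟨φ, hφ, hφs, hφa, hφ0, rfl⟩, rfl⟩
    have hψ : ContDiff ℝ (⊤ : ℕ∞) (φ * sqrtWeight c) := hφ.mul (contDiff_sqrtWeight hc)
    have hψa : tsupport (φ * sqrtWeight c) ⊆ Ioo (-a) a := tsupport_mul_subset_left.trans hφa
    have hψ0 : φ * sqrtWeight c ≠ 0 := fun h =>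
      hφ0 (by rw [← mul_sqrtWeight_div hc φ, h]; exact funext fun t => zero_div _)
    refine ⟨φ * sqrtWeight c, hψ, hφs.mul_right, hψa, hψ0, ?_⟩
    rw [rayleigh_div_sqrtWeight hc (hψ.of_le h1) hφs.mul_right hψa hψ0, mul_sqrtWeight_div hc]
  · rintro ⟨ψ, hψ, hψs, hψa, hψ0, rfl⟩
    refine ⟨_, ⟨ψ / sqrtWeight c, hψ.div (contDiff_sqrtWeight hc) fun t => (sqrtWeight_pos hc t).ne',
      by rw [div_eq_mul_inv]; exact hψs.mul_right, tsupport_div_sqrtWeight_subset.trans hψa,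
      fun h => hψ0 (by rw [← div_sqrtWeight_mul hc ψ, h, zero_mul]), rfl⟩,
      (rayleigh_div_sqrtWeight hc (hψ.of_le h1) hψs hψa hψ0).symm⟩

theorem sInf_weightedRayleighQuotients_sub (ha : 0 < a) (hc : 0 ≤ c) (E : ℝ) :
    sInf (weightedRayleighQuotients a c) - E = sInf (schrodingerRayleighQuotients a c E) := by
  rw [← image_sub_weightedRayleighQuotients hc E]
  exact (OrderIso.subRight E).map_csInf' (weightedRayleighQuotients_nonempty ha)
    weightedRayleighQuotients_bddBelow

end RayleighQuotients

theorem rayleigh_quotient_substitution_general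
    (a : ℝ) (ha : 0 < a)
    (σ : ℝ → ℝ)
    (s : ℝ) :
    sInf {r : ℝ | ∃ φ : ℝ → ℝ, ContDiff ℝ (⊤ : ℕ∞) φ ∧ HasCompactSupport φ ∧
        tsupport φ ⊆ Ioo (-a) a ∧ φ ≠ 0 ∧
        r = (∫ t in Ioo (-a) a, (deriv φ t) ^ 2 * Real.sqrt (1 + t ^ 2 * σ s ^ 2)) /
            (∫ t in Ioo (-a) a, (φ t) ^ 2 * Real.sqrt (1 + t ^ 2 * σ s ^ 2))}
      - π ^ 2 / (2 * a) ^ 2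
    =
    sInf {r : ℝ | ∃ φ : ℝ → ℝ, ContDiff ℝ (⊤ : ℕ∞) φ ∧ HasCompactSupport φ ∧
        tsupport φ ⊆ Ioo (-a) a ∧ φ ≠ 0 ∧
        r = (∫ t in Ioo (-a) a,
              ((deriv φ t) ^ 2 - (π ^ 2 / (2 * a) ^ 2) * (φ t) ^ 2 +
                (σ s ^ 2 * (2 - t ^ 2 * σ s ^ 2) /
                  (4 * Real.sqrt (1 + t ^ 2 * σ s ^ 2) ^ 4)) * (φ t) ^ 2)) /
            (∫ t in Ioo (-a) a, (φ t) ^ 2)} :=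
  sInf_weightedRayleighQuotients_sub ha (sq_nonneg (σ s)) _

/-- **Lemma (ground-state substitution).** For each fixed `s`, the Rayleigh
quotient infimum defining `λ(s)` (with weight `h₀(s,·)`) minus `E₁` equals the
infimum of the Rayleigh quotient of the one-dimensional Schrödinger operator
`-d²/dt² - E₁ + V(s,·)` with the effective potential
`V(s,t) = σ(s)²(2 - t²σ(s)²)/(4 h₀(s,t)⁴)`. -/
theorem rayleigh_quotient_substitution
    (a : ℝ) (ha : 0 < a)
    (σ : ℝ → ℝ) (hσcont : Continuous σ) (hσbdd : ∃ M, ∀ s, |σ s| ≤ M)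
    (s : ℝ) :
    sInf {r : ℝ | ∃ φ : ℝ → ℝ, ContDiff ℝ (⊤ : ℕ∞) φ ∧ HasCompactSupport φ ∧
        tsupport φ ⊆ Ioo (-a) a ∧ φ ≠ 0 ∧
        r = (∫ t in Ioo (-a) a, (deriv φ t) ^ 2 * Real.sqrt (1 + t ^ 2 * σ s ^ 2)) /
            (∫ t in Ioo (-a) a, (φ t) ^ 2 * Real.sqrt (1 + t ^ 2 * σ s ^ 2))}
      - π ^ 2 / (2 * a) ^ 2
    =
    sInf {r : ℝ | ∃ φ : ℝ → ℝ, ContDiff ℝ (⊤ : ℕ∞) φ ∧ HasCompactSupport φ ∧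
        tsupport φ ⊆ Ioo (-a) a ∧ φ ≠ 0 ∧
        r = (∫ t in Ioo (-a) a,
              ((deriv φ t) ^ 2 - (π ^ 2 / (2 * a) ^ 2) * (φ t) ^ 2 +
                (σ s ^ 2 * (2 - t ^ 2 * σ s ^ 2) /
                  (4 * Real.sqrt (1 + t ^ 2 * σ s ^ 2) ^ 4)) * (φ t) ^ 2)) /
            (∫ t in Ioo (-a) a, (φ t) ^ 2)} :=
  rayleigh_quotient_substitution_general a ha σ s
end

section
/- Let a > 0 and let σ : ℝ → ℝ be bounded and continuous with σ not identically zero and a·‖σ‖_∞ < √2. Let λ : ℝ → ℝ be defined by λ(s) := inf over φ ∈ C_c^∞((−a,a)) \ {0} of (∫_{−a}^a |φ'(t)|² h₀(s,t) dt)/(∫_{−a}^a |φ(t)|² h₀(s,t) dt) − E₁. Then for every ψ ∈ C_c^∞(ℝ × (−a,a)) one has the local Hardy inequality Q₀[ψ] − E₁·∥ψ∥²_{H₀} ≥ ∫_{ℝ×(−a,a)} h₀(s,t)^{-1} |∂_s ψ(s,t)|² ds dt + ∫_{ℝ×(−a,a)} λ(s) |ψ(s,t)|² h₀(s,t) ds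 dt. -/
/-! For each fixed `s`, the real and imaginary parts of the slice `ψ(s, ·)` are competitors in
the variational problem defining `λ(s) + E₁`, so
`(λ(s) + E₁) ∫ |ψ(s,·)|² h₀ ≤ ∫ h₀ |∂ₜψ(s,·)|²`; integrating in `s` gives the inequality, the
`∂ₛ` terms being the same on both sides. For the integral of `λ(s) ∫ |ψ(s,·)|² h₀` to be
meaningful, note that `λ + E₁` is an infimum of functions continuous in `s`, hence upper
semicontinuous and measurable, and the fiberwise inequality bounds
`(λ(s) + E₁) ∫ |ψ(s,·)|² h₀ ≥ 0` by an integrable function of `s`. -/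

open MeasureTheory Real Set Function

noncomputable section

def nonzeroTestFunctions (U : Set ℝ) : Set (ℝ → ℝ) :=
  {φ | ContDiff ℝ (⊤ : ℕ∞) φ ∧ HasCompactSupport φ ∧ tsupport φ ⊆ U ∧ φ ≠ 0}

def weightedRayleighQuotient (U : Set ℝ) (w φ : ℝ → ℝ) : ℝ :=
  (∫ t in U, deriv φ t ^ 2 * w t) / ∫ t in U, φ t ^ 2 * w t

def weightedGroundEnergy (U : Set ℝ) (w : ℝ → ℝ) : ℝ :=
  ⨅ φ : nonzeroTestFunctions U, weightedRayleighQuotient U w φ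

end

section WeightedGroundEnergy

theorem sInf_weightedRayleighQuotient_eq (U : Set ℝ) (w : ℝ → ℝ) :
    sInf {r : ℝ | ∃ φ : ℝ → ℝ, ContDiff ℝ (⊤ : ℕ∞) φ ∧ HasCompactSupport φ ∧
      tsupport φ ⊆ U ∧ φ ≠ 0 ∧ r = weightedRayleighQuotient U w φ} =
      weightedGroundEnergy U w := by
  rw [weightedGroundEnergy, iInf]
  congr 1
  ext r
  constructor
  · rintro ⟨φ, h₁, h₂, h₃, h₄, rfl⟩
    exact ⟨⟨φ, h₁, h₂, h₃, h₄⟩, rfl⟩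
  · rintro ⟨⟨φ, h₁, h₂, h₃, h₄⟩, rfl⟩
    exact ⟨φ, h₁, h₂, h₃, h₄, rfl⟩

variable {U : Set ℝ} {w : ℝ → ℝ}

theorem weightedRayleighQuotient_nonneg (hw : ∀ t, 0 ≤ w t) (φ : ℝ → ℝ) :
    0 ≤ weightedRayleighQuotient U w φ :=
  div_nonneg (integral_nonneg fun t => mul_nonneg (sq_nonneg _) (hw t))
    (integral_nonneg fun t => mul_nonneg (sq_nonneg _) (hw t))

theorem bddBelow_range_weightedRayleighQuotient (hw : ∀ t, 0 ≤ w t) :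
    BddBelow (range fun φ : nonzeroTestFunctions U => weightedRayleighQuotient U w φ) :=
  ⟨0, by rintro _ ⟨φ, rfl⟩; exact weightedRayleighQuotient_nonneg hw φ⟩

theorem weightedGroundEnergy_nonneg (hw : ∀ t, 0 ≤ w t) : 0 ≤ weightedGroundEnergy U w :=
  Real.iInf_nonneg fun φ => weightedRayleighQuotient_nonneg hw φ

theorem setIntegral_sq_mul_pos (hw : Continuous w) (hw₀ : ∀ t, 0 < w t) {φ : ℝ → ℝ}
    (hφ : Continuous φ) (hφc : HasCompactSupport φ) (hφU : tsupport φ ⊆ U) (hφ₀ : φ ≠ 0) :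
    0 < ∫ t in U, φ t ^ 2 * w t := by
  have hvanish : ∀ t ∉ U, φ t ^ 2 * w t = 0 := fun t ht => by
    rw [image_eq_zero_of_notMem_tsupport fun h => ht (hφU h)]
    ring
  have hsupport : support (fun t => φ t ^ 2 * w t) = support φ := by
    ext t
    simp [(hw₀ t).ne']
  have hint : Integrable fun t => φ t ^ 2 * w t :=
    ((hφ.pow 2).mul hw).integrable_of_hasCompactSupport (hφc.mono hsupport.le)
  rw [setIntegral_eq_integral_of_forall_compl_eq_zero hvanish,
    integral_pos_iff_support_of_nonneg (fun t => mul_nonneg (sq_nonneg _) (hw₀ t).le) hint,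
    hsupport]
  exact hφ.isOpen_support.measure_pos volume (support_nonempty_iff.2 hφ₀)

theorem weightedGroundEnergy_mul_setIntegral_le (hw : Continuous w) (hw₀ : ∀ t, 0 < w t)
    {φ : ℝ → ℝ} (hφ : ContDiff ℝ (⊤ : ℕ∞) φ) (hφc : HasCompactSupport φ) (hφU : tsupport φ ⊆ U) :
    weightedGroundEnergy U w * ∫ t in U, φ t ^ 2 * w t ≤ ∫ t in U, deriv φ t ^ 2 * w t := by
  rcases eq_or_ne φ 0 with rfl | hφ₀
  · simp
  have hle := ciInf_le (bddBelow_range_weightedRayleighQuotient fun t => (hw₀ t).le)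
    (⟨φ, hφ, hφc, hφU, hφ₀⟩ : nonzeroTestFunctions U)
  exact (le_div_iff₀ (setIntegral_sq_mul_pos hw hw₀ hφ.continuous hφc hφU hφ₀)).1 hle

theorem setIntegral_norm_sq_mul_eq (hw : Continuous w) {f : ℝ → ℂ} (hf : Continuous f)
    (hfc : HasCompactSupport f) :
    ∫ t in U, ‖f t‖ ^ 2 * w t =
      (∫ t in U, (f t).re ^ 2 * w t) + ∫ t in U, (f t).im ^ 2 * w t := by
  have hint : ∀ L : ℂ →L[ℝ] ℝ, Integrable (fun t => L (f t) ^ 2 * w t) (volume.restrict U) :=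
    fun L => (((L.continuous.comp hf).pow 2).mul hw).integrable_of_hasCompactSupport
      (hfc.mono fun t ht hft => ht (by simp [hft])) |>.integrableOn
  rw [← integral_add (by simpa using hint Complex.reCLM) (by simpa using hint Complex.imCLM)]
  congr 1 with t
  rw [Complex.sq_norm, Complex.normSq_apply]
  ring

theorem weightedGroundEnergy_mul_setIntegral_norm_sq_le (hw : Continuous w)
    (hw₀ : ∀ t, 0 < w t) {ψ : ℝ → ℂ} (hψ : ContDiff ℝ (⊤ : ℕ∞) ψ) (hψc : HasCompactSupport ψ)
    (hψU : tsupport ψ ⊆ U) :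
    weightedGroundEnergy U w * ∫ t in U, ‖ψ t‖ ^ 2 * w t ≤ ∫ t in U, w t * ‖deriv ψ t‖ ^ 2 := by
  have hpart : ∀ L : ℂ →L[ℝ] ℝ, weightedGroundEnergy U w * ∫ t in U, L (ψ t) ^ 2 * w t ≤
      ∫ t in U, L (deriv ψ t) ^ 2 * w t := by
    intro L
    have hderiv : deriv (L ∘ ψ) = fun t => L (deriv ψ t) := funext fun t =>
      (L.hasFDerivAt.comp_hasDerivAt t (hψ.differentiable (by simp) t).hasDerivAt).deriv
    simpa [hderiv] using weightedGroundEnergy_mul_setIntegral_le hw hw₀ (L.contDiff.comp hψ)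
      (hψc.comp_left L.map_zero) ((tsupport_comp_subset L.map_zero ψ).trans hψU)
  simp_rw [mul_comm (w _)]
  rw [setIntegral_norm_sq_mul_eq hw hψ.continuous hψc,
    setIntegral_norm_sq_mul_eq hw (hψ.continuous_deriv (by simp)) hψc.deriv, mul_add]
  exact add_le_add (by simpa using hpart Complex.reCLM) (by simpa using hpart Complex.imCLM)

end WeightedGroundEnergy

section Slices

variable {E : Type*} [Zero E] {f : ℝ → ℝ → E}

theorem HasCompactSupport.apply_of_uncurry (hf : HasCompactSupport (uncurry f)) (s : ℝ) :
    HasCompactSupport (f s) :=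
  (hf.image continuous_snd).of_isClosed_subset (isClosed_tsupport _) fun t ht =>
    ⟨(s, t), tsupport_comp_subset_preimage (uncurry f) (Continuous.prodMk_right s) ht, rfl⟩

theorem tsupport_apply_subset_of_subset_prod {U : Set ℝ} (hf : tsupport (uncurry f) ⊆ univ ×ˢ U)
    (s : ℝ) : tsupport (f s) ⊆ U := fun _ ht =>
  (hf (tsupport_comp_subset_preimage (uncurry f) (Continuous.prodMk_right s) ht)).2

end Slices

section Parametric

variable {X E : Type*} [TopologicalSpace X] [FirstCountableTopology X] [LocallyCompactSpace X]
  [NormedAddCommGroup E] [NormedSpace ℝ E]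

theorem continuous_parametric_setIntegral_of_eq_zero_off_compact {F : X → ℝ → E}
    (hF : Continuous (uncurry F)) {K U : Set ℝ} (hK : IsCompact K) (hKU : K ⊆ U)
    (hFK : ∀ x, ∀ t ∉ K, F x t = 0) :
    Continuous fun x => ∫ t in U, F x t := by
  have hrestrict : ∀ x, ∫ t in U, F x t = ∫ t in K, F x t := fun x => by
    rw [setIntegral_eq_integral_of_forall_compl_eq_zero fun t ht => hFK x t fun h => ht (hKU h),
      setIntegral_eq_integral_of_forall_compl_eq_zero (hFK x)]
  simp_rw [hrestrict]
  exact continuous_parametric_integral_of_continuous hF hK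

theorem deriv_apply_eq_fderiv_uncurry {f : ℝ → ℝ → E} (hf : Differentiable ℝ (uncurry f))
    (s t : ℝ) : deriv (f s) t = fderiv ℝ (uncurry f) (s, t) (0, 1) :=
  ((hf (s, t)).hasFDerivAt.comp_hasDerivAt t
    ((hasDerivAt_const t s).prodMk (hasDerivAt_id t))).deriv

theorem continuous_uncurry_deriv_apply {f : ℝ → ℝ → E} (hf : ContDiff ℝ 1 (uncurry f)) :
    Continuous (uncurry fun s t => deriv (f s) t) := by
  have hpartial : (uncurry fun s t => deriv (f s) t) = fun p => fderiv ℝ (uncurry f) p (0, 1) :=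
    funext fun p => deriv_apply_eq_fderiv_uncurry (hf.differentiable one_ne_zero) p.1 p.2
  rw [hpartial]
  exact (hf.continuous_fderiv one_ne_zero).clm_apply continuous_const

theorem deriv_apply_eq_zero_of_notMem_tsupport {f : ℝ → ℝ → E} {s t : ℝ}
    (h : (s, t) ∉ tsupport (uncurry f)) : deriv (f s) t = 0 :=
  deriv_of_notMem_tsupport fun ht =>
    h (tsupport_comp_subset_preimage (uncurry f) (Continuous.prodMk_right s) ht)

theorem integrable_parametric_setIntegral {F : ℝ → ℝ → E} (hF : Continuous (uncurry F))
    {K : Set (ℝ × ℝ)} {U : Set ℝ} (hK : IsCompact K) (hKU : K ⊆ univ ×ˢ U)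
    (hFK : ∀ s t, (s, t) ∉ K → F s t = 0) :
    Integrable fun s => ∫ t in U, F s t := by
  refine (continuous_parametric_setIntegral_of_eq_zero_off_compact hF (hK.image continuous_snd)
    (by rintro _ ⟨p, hp, rfl⟩; exact (hKU hp).2)
    fun s t ht => hFK s t fun h => ht ⟨_, h, rfl⟩).integrable_of_hasCompactSupport ?_
  refine HasCompactSupport.intro (hK.image continuous_fst) fun s hs => ?_
  simp [hFK s _ fun h => hs ⟨_, h, rfl⟩]

theorem upperSemicontinuous_weightedGroundEnergy {U : Set ℝ} {w : X → ℝ → ℝ}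
    (hw : Continuous (uncurry w)) (hw₀ : ∀ x t, 0 < w x t) :
    UpperSemicontinuous fun x => weightedGroundEnergy U (w x) := by
  refine upperSemicontinuous_ciInf
    (fun x => bddBelow_range_weightedRayleighQuotient fun t => (hw₀ x t).le) ?_
  rintro ⟨φ, hφ, hφc, hφU, hφ₀⟩
  have hcont : ∀ g : ℝ → ℝ, Continuous g → tsupport g ⊆ tsupport φ →
      Continuous fun x => ∫ t in U, g t ^ 2 * w x t := fun g hg hgφ =>
    continuous_parametric_setIntegral_of_eq_zero_off_compact (by fun_prop) hφc hφU
      fun x t ht => by simp [image_eq_zero_of_notMem_tsupport fun h => ht (hgφ h)]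
  refine Continuous.upperSemicontinuous <|
    (hcont _ (hφ.continuous_deriv (by simp)) (tsupport_deriv_subset (f := φ))).div
      (hcont _ hφ.continuous subset_rfl) fun x => ?_
  exact (setIntegral_sq_mul_pos (hw.comp (Continuous.prodMk_right x)) (hw₀ x) hφ.continuous hφc
    hφU hφ₀).ne'

end Parametric

theorem local_hardy_inequality_general
    (a : ℝ)
    (σ : ℝ → ℝ) (hσcont : Continuous σ)
    (lam : ℝ → ℝ)
    (hlam : ∀ s, lam s =
      sInf {r : ℝ | ∃ φ : ℝ → ℝ, ContDiff ℝ (⊤ : ℕ∞) φ ∧ HasCompactSupport φ ∧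
        tsupport φ ⊆ Ioo (-a) a ∧ φ ≠ 0 ∧
        r = (∫ t in Ioo (-a) a, (deriv φ t) ^ 2 * Real.sqrt (1 + t ^ 2 * σ s ^ 2)) /
            (∫ t in Ioo (-a) a, (φ t) ^ 2 * Real.sqrt (1 + t ^ 2 * σ s ^ 2))}
      - π ^ 2 / (2 * a) ^ 2) :
    ∀ ψ : ℝ → ℝ → ℂ,
      ContDiff ℝ (⊤ : ℕ∞) (fun p : ℝ × ℝ => ψ p.1 p.2) →
      HasCompactSupport (fun p : ℝ × ℝ => ψ p.1 p.2) →
      tsupport (fun p : ℝ × ℝ => ψ p.1 p.2) ⊆ univ ×ˢ Ioo (-a) a →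
      ((∫ s : ℝ, ∫ t in Ioo (-a) a,
            (Real.sqrt (1 + t ^ 2 * σ s ^ 2))⁻¹ *
              ‖deriv (fun x => ψ x t) s‖ ^ 2) +
          (∫ s : ℝ, ∫ t in Ioo (-a) a,
            Real.sqrt (1 + t ^ 2 * σ s ^ 2) * ‖deriv (ψ s) t‖ ^ 2)) -
          (π ^ 2 / (2 * a) ^ 2) *
            (∫ s : ℝ, ∫ t in Ioo (-a) a,
              ‖ψ s t‖ ^ 2 * Real.sqrt (1 + t ^ 2 * σ s ^ 2)) ≥
        (∫ s : ℝ, ∫ t in Ioo (-a) a,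
            (Real.sqrt (1 + t ^ 2 * σ s ^ 2))⁻¹ *
              ‖deriv (fun x => ψ x t) s‖ ^ 2) +
        (∫ s : ℝ, ∫ t in Ioo (-a) a,
            lam s * ‖ψ s t‖ ^ 2 * Real.sqrt (1 + t ^ 2 * σ s ^ 2)) := by
  intro ψ hψ hψc hψU
  have hw : Continuous (uncurry fun s t => √(1 + t ^ 2 * σ s ^ 2)) := by fun_prop
  have hw₀ : ∀ s t, 0 < √(1 + t ^ 2 * σ s ^ 2) := fun s t => Real.sqrt_pos.2 (by positivity)
  set Λ : ℝ → ℝ := fun s => weightedGroundEnergy (Ioo (-a) a) fun t => √(1 + t ^ 2 * σ s ^ 2)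
  set C : ℝ → ℝ := fun s => ∫ t in Ioo (-a) a, ‖ψ s t‖ ^ 2 * √(1 + t ^ 2 * σ s ^ 2)
  set B : ℝ → ℝ := fun s => ∫ t in Ioo (-a) a, √(1 + t ^ 2 * σ s ^ 2) * ‖deriv (ψ s) t‖ ^ 2
  have hlamΛ : ∀ s, lam s = Λ s - π ^ 2 / (2 * a) ^ 2 := fun s =>
    (hlam s).trans <| congrArg (· - π ^ 2 / (2 * a) ^ 2) <|
      sInf_weightedRayleighQuotient_eq (Ioo (-a) a) fun t => √(1 + t ^ 2 * σ s ^ 2)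
  have hfiber : ∀ s, Λ s * C s ≤ B s := fun s =>
    weightedGroundEnergy_mul_setIntegral_norm_sq_le (by fun_prop) (hw₀ s)
      (hψ.comp (contDiff_const.prodMk contDiff_id)) (hψc.apply_of_uncurry s)
      (tsupport_apply_subset_of_subset_prod hψU s)
  have hC : Integrable C := integrable_parametric_setIntegral (by fun_prop) hψc hψU
    fun s t h => by simp [image_eq_zero_of_notMem_tsupport h]
  have hderiv : Continuous (uncurry fun s t => deriv (ψ s) t) :=
    continuous_uncurry_deriv_apply (hψ.of_le (by simp))
  have hB : Integrable B := integrable_parametric_setIntegral (by fun_prop) hψc hψU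
    fun s t h => by simp [deriv_apply_eq_zero_of_notMem_tsupport h]
  have hΛC : Integrable fun s => Λ s * C s :=
    hB.mono' ((upperSemicontinuous_weightedGroundEnergy hw hw₀).measurable.aestronglyMeasurable.mul
      hC.aestronglyMeasurable) <| ae_of_all _ fun s => (Real.norm_of_nonneg <| mul_nonneg
        (weightedGroundEnergy_nonneg fun t => (hw₀ s t).le) (integral_nonneg fun t => by positivity)
        ).trans_le (hfiber s)
  have hlamC : ∫ s, ∫ t in Ioo (-a) a, lam s * ‖ψ s t‖ ^ 2 * √(1 + t ^ 2 * σ s ^ 2) =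
      (∫ s, Λ s * C s) - π ^ 2 / (2 * a) ^ 2 * ∫ s, C s := by
    rw [← integral_const_mul, ← integral_sub hΛC (hC.const_mul _)]
    congr 1 with s
    simp only [C, mul_assoc, integral_const_mul, hlamΛ]
    ring
  rw [ge_iff_le, hlamC]
  linarith [integral_mono hΛC hB hfiber]

/-- **Local Hardy inequality.** With
`λ(s) = inf_{φ ∈ C_c^∞((-a,a)) \ {0}} (∫ |φ'|² h₀(s,·))/(∫ |φ|² h₀(s,·)) - E₁`,
one has, for every test function `ψ ∈ C_c^∞(ℝ × (-a,a))`,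
`Q₀[ψ] - E₁ ‖ψ‖²_{H₀} ≥ ‖h₀⁻¹ ∂₁ψ‖²_{H₀} + ‖λ^{1/2} ψ‖²_{H₀}`. -/
theorem local_hardy_inequality
    (a : ℝ) (ha : 0 < a)
    (σ : ℝ → ℝ) (hσcont : Continuous σ) (hσbdd : ∃ M, ∀ s, |σ s| ≤ M)
    (hσne : ∃ s, σ s ≠ 0)
    (hthin : a * (⨆ s, |σ s|) < Real.sqrt 2)
    (lam : ℝ → ℝ)
    (hlam : ∀ s, lam s =
      sInf {r : ℝ | ∃ φ : ℝ → ℝ, ContDiff ℝ (⊤ : ℕ∞) φ ∧ HasCompactSupport φ ∧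
        tsupport φ ⊆ Ioo (-a) a ∧ φ ≠ 0 ∧
        r = (∫ t in Ioo (-a) a, (deriv φ t) ^ 2 * Real.sqrt (1 + t ^ 2 * σ s ^ 2)) /
            (∫ t in Ioo (-a) a, (φ t) ^ 2 * Real.sqrt (1 + t ^ 2 * σ s ^ 2))}
      - π ^ 2 / (2 * a) ^ 2) :
    ∀ ψ : ℝ → ℝ → ℂ,
      ContDiff ℝ (⊤ : ℕ∞) (fun p : ℝ × ℝ => ψ p.1 p.2) →
      HasCompactSupport (fun p : ℝ × ℝ => ψ p.1 p.2) →
      tsupport (fun p : ℝ × ℝ => ψ p.1 p.2) ⊆ univ ×ˢ Ioo (-a) a →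
      ((∫ s : ℝ, ∫ t in Ioo (-a) a,
            (Real.sqrt (1 + t ^ 2 * σ s ^ 2))⁻¹ *
              ‖deriv (fun x => ψ x t) s‖ ^ 2) +
          (∫ s : ℝ, ∫ t in Ioo (-a) a,
            Real.sqrt (1 + t ^ 2 * σ s ^ 2) * ‖deriv (ψ s) t‖ ^ 2)) -
          (π ^ 2 / (2 * a) ^ 2) *
            (∫ s : ℝ, ∫ t in Ioo (-a) a,
              ‖ψ s t‖ ^ 2 * Real.sqrt (1 + t ^ 2 * σ s ^ 2)) ≥
        (∫ s : ℝ, ∫ t in Ioo (-a) a,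
            (Real.sqrt (1 + t ^ 2 * σ s ^ 2))⁻¹ *
              ‖deriv (fun x => ψ x t) s‖ ^ 2) +
        (∫ s : ℝ, ∫ t in Ioo (-a) a,
            lam s * ‖ψ s t‖ ^ 2 * Real.sqrt (1 + t ^ 2 * σ s ^ 2)) :=
  local_hardy_inequality_general a σ hσcont lam hlam
end

section
/- Let a > 0, let I ⊂ ℝ be a bounded interval of positive length with centre s₀ and half-length b := |I|/2, let χ_I denote the characteristic function of I × (−a,a), and set ρ(s,t) := √(1 + (s − s₀)²). Then for every ψ ∈ C_c^∞(ℝ × (−a,a)), with respect to Lebesgue measure on ℝ × (−a,a): ∫ ρ^{-2}|ψ|² ≤ 16 ∫ |∂_s ψ|² + (2 + 16/b²) ∫ χ_I |ψ|². -/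
/-!
Ground-state substitution. If `φ` is continuous and differentiable off a countable set, then
expanding `0 ≤ ∫ ‖f' + φ f‖²` and using `∫ (φ ‖f‖²)' = 0` gives `∫ (φ' - φ²) ‖f‖² ≤ ∫ ‖f'‖²`.
Take `φ s = 1 / (2 (s₀ - s))` off `I = [s₀ - b, s₀ + b]`, where `φ' - φ² = 1 / (4 (s - s₀)²)`,
and its linear interpolation `(s₀ - s) / (2 b²)` on `I`, where `16 (φ' - φ²) ≥ -12 / b²`.
Then `ρ⁻² ≤ 16 (φ' - φ²) + (2 + 16 / b²) χ_I` pointwise, which gives the estimate on every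
line `t = const`; Fubini integrates it over `t`.
-/

open MeasureTheory Set Topology Function
open scoped RealInnerProductSpace

theorem HasCompactSupport.of_forall_eq_zero_of_fderiv_eq_zero {𝕜 E F G : Type*}
    [NontriviallyNormedField 𝕜] [NormedAddCommGroup E] [NormedSpace 𝕜 E]
    [NormedAddCommGroup F] [NormedSpace 𝕜 F] [Zero G] {f : E → F} {g : E → G}
    (hf : HasCompactSupport f) (hg : ∀ x, f x = 0 → fderiv 𝕜 f x = 0 → g x = 0) :
    HasCompactSupport g :=
  hf.mono' fun x hx => by_contra fun h => hx <| hg x (image_eq_zero_of_notMem_tsupport h)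
    (notMem_support.1 fun h' => h (support_fderiv_subset 𝕜 h'))

theorem integral_eq_zero_of_hasDerivAt_off_countable_of_hasCompactSupport
    {E : Type*} [NormedAddCommGroup E] [NormedSpace ℝ E] [CompleteSpace E]
    {F F' : ℝ → E} {S : Set ℝ} (hS : S.Countable) (hF : Continuous F)
    (hFc : HasCompactSupport F) (hFd : ∀ x ∉ S, HasDerivAt F (F' x) x) (hF' : Integrable F') :
    ∫ x, F' x = 0 := by
  obtain ⟨r, hr, hFr⟩ := hFc.isCompact.isBounded.subset_ball_lt 0 0
  rw [Real.ball_eq_Ioo, zero_sub, zero_add] at hFr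
  have hF_off : ∀ x ∉ Ioo (-r) r, F x = 0 := fun x hx =>
    image_eq_zero_of_notMem_tsupport fun h => hx (hFr h)
  have hF'_off : ∀ᵐ x, x ∉ Ioc (-r) r → F' x = 0 := by
    filter_upwards [hS.ae_notMem volume] with x hxS hx
    have hx' : x ∉ tsupport F := fun h => hx (Ioo_subset_Ioc_self (hFr h))
    exact (hFd x hxS).unique <|
      (hasDerivAt_const x 0).congr_of_eventuallyEq (notMem_tsupport_iff_eventuallyEq.1 hx')
  have hr' : -r ≤ r := neg_le_self hr.le
  rw [← setIntegral_eq_integral_of_ae_compl_eq_zero hF'_off,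
    ← intervalIntegral.integral_of_le hr',
    integral_eq_of_hasDerivAt_off_countable_of_le F F' hr' hS hF.continuousOn
      (fun x hx => hFd x hx.2) hF'.intervalIntegrable,
    hF_off r (by simp), hF_off (-r) (by simp), sub_zero]

theorem integral_sub_sq_mul_norm_sq_le_integral_norm_deriv_sq
    {E : Type*} [NormedAddCommGroup E] [InnerProductSpace ℝ E]
    {φ φ' : ℝ → ℝ} {S : Set ℝ} (hS : S.Countable) (hφ : Continuous φ)
    (hφd : ∀ x ∉ S, HasDerivAt φ (φ' x) x) (hφ' : LocallyIntegrable φ')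
    {f : ℝ → E} (hf : ContDiff ℝ 1 f) (hfc : HasCompactSupport f) :
    ∫ x, (φ' x - φ x ^ 2) * ‖f x‖ ^ 2 ≤ ∫ x, ‖deriv f x‖ ^ 2 := by
  have hf₀ : Continuous f := hf.continuous
  have hf' : Continuous (deriv f) := hf.continuous_deriv le_rfl
  have hfd : ∀ x, HasDerivAt f (deriv f x) x :=
    fun x => (hf.differentiable one_ne_zero x).hasDerivAt
  have hsupp : ∀ {g : ℝ → ℝ}, (∀ x, f x = 0 → fderiv ℝ f x = 0 → g x = 0) →
      HasCompactSupport g :=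
    hfc.of_forall_eq_zero_of_fderiv_eq_zero
  have hint : ∀ {g : ℝ → ℝ}, Continuous g → (∀ x, f x = 0 → fderiv ℝ f x = 0 → g x = 0) →
      Integrable g :=
    fun hg hg0 => hg.integrable_of_hasCompactSupport (hsupp hg0)
  have hfc' : HasCompactSupport (fun x => ‖f x‖ ^ 2) := hsupp fun x h₀ _ => by simp [h₀]
  have hibp_int : Integrable fun x => φ' x * ‖f x‖ ^ 2 + φ x * (2 * ⟪f x, deriv f x⟫) :=
    (hφ'.integrable_smul_right_of_hasCompactSupport (hf₀.norm.pow 2) hfc').add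
      (hint (hφ.mul (continuous_const.mul (hf₀.inner hf'))) fun x h₀ _ => by simp [h₀])
  have hibp : ∫ x, (φ' x * ‖f x‖ ^ 2 + φ x * (2 * ⟪f x, deriv f x⟫)) = 0 :=
    integral_eq_zero_of_hasDerivAt_off_countable_of_hasCompactSupport hS
      (F := fun x => φ x * ‖f x‖ ^ 2) (hφ.mul (hf₀.norm.pow 2))
      (hsupp fun x h₀ _ => by simp [h₀]) (fun x hx => (hφd x hx).mul (hfd x).norm_sq) hibp_int
  have hsq : ∀ x, ‖deriv f x + φ x • f x‖ ^ 2
      = ‖deriv f x‖ ^ 2 + φ x * (2 * ⟪f x, deriv f x⟫) + φ x ^ 2 * ‖f x‖ ^ 2 := by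
    intro x
    rw [norm_add_sq_real, inner_smul_right, norm_smul, Real.norm_eq_abs, mul_pow, sq_abs,
      real_inner_comm]
    ring
  have h₁ : Integrable fun x => ‖deriv f x‖ ^ 2 :=
    hint (hf'.norm.pow 2) fun x _ h₁ => by simp [deriv, h₁]
  have h₂ : Integrable fun x => ‖deriv f x + φ x • f x‖ ^ 2 :=
    hint (by fun_prop) fun x h₀ h₁ => by simp [deriv, h₀, h₁]
  calc ∫ x, (φ' x - φ x ^ 2) * ‖f x‖ ^ 2
      = ∫ x, (‖deriv f x‖ ^ 2 - ‖deriv f x + φ x • f x‖ ^ 2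
          + (φ' x * ‖f x‖ ^ 2 + φ x * (2 * ⟪f x, deriv f x⟫))) := by
        congr 1 with x; rw [hsq]; ring
    _ = (∫ x, ‖deriv f x‖ ^ 2) - ∫ x, ‖deriv f x + φ x • f x‖ ^ 2 := by
        rw [integral_add (f := fun x => ‖deriv f x‖ ^ 2 - ‖deriv f x + φ x • f x‖ ^ 2)
          (h₁.sub h₂) hibp_int, hibp, add_zero, integral_sub h₁ h₂]
    _ ≤ ∫ x, ‖deriv f x‖ ^ 2 := sub_le_self _ (integral_nonneg fun x => by positivity)

theorem integral_integral_le_of_forall_slice_le {α β : Type*} [MeasurableSpace α]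
    [MeasurableSpace β] {μ μ' : Measure α} {ν : Measure β} [SFinite μ] [SFinite μ'] [SFinite ν]
    {F G H : α → β → ℝ} (hF : Integrable (uncurry F) (μ.prod ν))
    (hG : Integrable (uncurry G) (μ.prod ν)) (hH : Integrable (uncurry H) (μ'.prod ν))
    {c d : ℝ} (h : ∀ y, ∫ x, F x y ∂μ ≤ c * ∫ x, G x y ∂μ + d * ∫ x, H x y ∂μ') :
    ∫ x, ∫ y, F x y ∂ν ∂μ ≤ c * ∫ x, ∫ y, G x y ∂ν ∂μ + d * ∫ x, ∫ y, H x y ∂ν ∂μ' := by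
  have hG' : Integrable (fun y => c * ∫ x, G x y ∂μ) ν := hG.integral_prod_right.const_mul c
  have hH' : Integrable (fun y => d * ∫ x, H x y ∂μ') ν := hH.integral_prod_right.const_mul d
  calc ∫ x, ∫ y, F x y ∂ν ∂μ = ∫ y, ∫ x, F x y ∂μ ∂ν := integral_integral_swap hF
    _ ≤ ∫ y, (c * ∫ x, G x y ∂μ + d * ∫ x, H x y ∂μ') ∂ν :=
        integral_mono hF.integral_prod_right (hG'.add hH') h
    _ = _ := by
        rw [integral_add hG' hH', integral_const_mul, integral_const_mul,
          integral_integral_swap hG, integral_integral_swap hH]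

theorem HasCompactSupport.comp_prodMk_left {X Y M : Type*} [TopologicalSpace X] [T2Space X]
    [TopologicalSpace Y] [Zero M] {Ψ : X × Y → M} (hΨ : HasCompactSupport Ψ) (y : Y) :
    HasCompactSupport fun x => Ψ (x, y) :=
  .intro (hΨ.isCompact.image continuous_fst) fun x hx =>
    image_eq_zero_of_notMem_tsupport fun h => hx ⟨(x, y), h, rfl⟩

theorem hasDerivAt_comp_prodMk_left {E : Type*} [NormedAddCommGroup E] [NormedSpace ℝ E]
    {Ψ : ℝ × ℝ → E} {s t : ℝ} (hΨ : DifferentiableAt ℝ Ψ (s, t)) :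
    HasDerivAt (fun x => Ψ (x, t)) (fderiv ℝ Ψ (s, t) (1, 0)) s :=
  hΨ.hasFDerivAt.comp_hasDerivAt s ((hasDerivAt_id s).prodMk (hasDerivAt_const s t))

section HardyPhi

noncomputable def hardyPhi (s₀ b s : ℝ) : ℝ :=
  if |s - s₀| ≤ b then (s₀ - s) / (2 * b ^ 2) else (2 * (s₀ - s))⁻¹

noncomputable def hardyPhiDeriv (s₀ b s : ℝ) : ℝ :=
  if |s - s₀| ≤ b then -(2 * b ^ 2)⁻¹ else (2 * (s - s₀) ^ 2)⁻¹

variable {s₀ b : ℝ}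

theorem continuous_hardyPhi (hb : 0 < b) : Continuous (hardyPhi s₀ b) := by
  refine continuous_if_le (by fun_prop) continuous_const (by fun_prop) ?_ fun s hs => ?_
  · refine ContinuousOn.inv₀ (by fun_prop) fun s hs h => ?_
    have : s - s₀ = 0 := by linarith
    exact hb.not_ge (by simpa [this] using hs)
  · have hs₀ : s₀ - s ≠ 0 := fun h => by simp [abs_sub_comm, h] at hs; linarith
    have hsq : (s₀ - s) ^ 2 = b ^ 2 := by rw [← sq_abs, abs_sub_comm, hs]
    field_simp
    linarith

theorem hasDerivAt_hardyPhi (hb : 0 < b) {s : ℝ} (hs : |s - s₀| ≠ b) :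
    HasDerivAt (hardyPhi s₀ b) (hardyPhiDeriv s₀ b s) s := by
  rcases hs.lt_or_gt with hs | hs
  · have hev : hardyPhi s₀ b =ᶠ[𝓝 s] fun x => (s₀ - x) / (2 * b ^ 2) := by
      filter_upwards [(by fun_prop : Continuous fun x => |x - s₀|).continuousAt.eventually_lt
        continuousAt_const hs] with x hx
      exact if_pos (le_of_lt hx)
    rw [hardyPhiDeriv, if_pos hs.le]
    exact ((((hasDerivAt_id' s).const_sub s₀).div_const (2 * b ^ 2)).congr_deriv (by ring)
      ).congr_of_eventuallyEq hev
  · have hev : hardyPhi s₀ b =ᶠ[𝓝 s] fun x => (2 * (s₀ - x))⁻¹ := by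
      filter_upwards [continuousAt_const.eventually_lt
        (by fun_prop : Continuous fun x => |x - s₀|).continuousAt hs] with x hx
      exact if_neg (not_le.2 hx)
    rw [hardyPhiDeriv, if_neg (not_le.2 hs)]
    have hs₀ : s - s₀ ≠ 0 := fun h => by simp [h] at hs; linarith
    exact (((((hasDerivAt_id' s).const_sub s₀).const_mul 2).inv
      (mul_ne_zero two_ne_zero (sub_ne_zero.2 (sub_ne_zero.1 hs₀).symm))).congr_deriv
      (by rw [show (2 * (s₀ - s)) ^ 2 = 4 * (s - s₀) ^ 2 by ring]; field_simp; ring)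
      ).congr_of_eventuallyEq hev

theorem abs_hardyPhiDeriv_le (hb : 0 < b) (s : ℝ) : |hardyPhiDeriv s₀ b s| ≤ (2 * b ^ 2)⁻¹ := by
  unfold hardyPhiDeriv
  split_ifs with h
  · rw [abs_neg, abs_of_pos (by positivity)]
  · have hsq : b ^ 2 < (s - s₀) ^ 2 := by rw [← sq_abs (s - s₀)]; gcongr; linarith
    rw [abs_of_pos (by have := (pow_pos hb 2).trans hsq; positivity)]
    gcongr

theorem locallyIntegrable_hardyPhiDeriv (hb : 0 < b) :
    LocallyIntegrable (hardyPhiDeriv s₀ b) := by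
  refine (memLp_top_of_bound ?_ _ (.of_forall fun s => abs_hardyPhiDeriv_le hb s)
    ).locallyIntegrable le_top
  exact (Measurable.ite (measurableSet_le (by fun_prop) measurable_const) measurable_const
    (by fun_prop)).aestronglyMeasurable

theorem inv_one_add_sq_le_hardyPhi (hb : 0 < b) (s : ℝ) :
    (1 + (s - s₀) ^ 2)⁻¹ ≤ 16 * (hardyPhiDeriv s₀ b s - hardyPhi s₀ b s ^ 2)
      + (Icc (s₀ - b) (s₀ + b)).indicator (fun _ => 2 + 16 / b ^ 2) s := by
  unfold hardyPhi hardyPhiDeriv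
  split_ifs with h
  · rw [indicator_of_mem (mem_Icc_iff_abs_le.1 (by rwa [abs_sub_comm]))]
    have hle_one : (1 + (s - s₀) ^ 2)⁻¹ ≤ 1 := inv_le_one_of_one_le₀ (by nlinarith)
    have hsq : 0 ≤ b ^ 2 - (s - s₀) ^ 2 := by
      rw [sub_nonneg, ← sq_abs (s - s₀)]; gcongr
    have hrhs : 16 * (-(2 * b ^ 2)⁻¹ - ((s₀ - s) / (2 * b ^ 2)) ^ 2) + (2 + 16 / b ^ 2) - 1 =
        (b ^ 4 + 4 * b ^ 2 + 4 * (b ^ 2 - (s - s₀) ^ 2)) / b ^ 4 := by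
      field_simp; ring
    have : 0 ≤ (b ^ 4 + 4 * b ^ 2 + 4 * (b ^ 2 - (s - s₀) ^ 2)) / b ^ 4 := by positivity
    linarith
  · rw [indicator_of_notMem (fun hs => h (by rw [abs_sub_comm]; exact mem_Icc_iff_abs_le.2 hs)),
      add_zero]
    have hs : 0 < (s - s₀) ^ 2 :=
      (pow_pos hb 2).trans (by rw [← sq_abs (s - s₀)]; gcongr; linarith)
    have hrhs : 16 * ((2 * (s - s₀) ^ 2)⁻¹ - (2 * (s₀ - s))⁻¹ ^ 2) = 4 * ((s - s₀) ^ 2)⁻¹ := by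
      field_simp; ring
    have hle : (1 + (s - s₀) ^ 2)⁻¹ ≤ ((s - s₀) ^ 2)⁻¹ := inv_anti₀ hs (by linarith)
    have : 0 ≤ ((s - s₀) ^ 2)⁻¹ := by positivity
    linarith

theorem integral_inv_one_add_sq_mul_norm_sq_le {E : Type*} [NormedAddCommGroup E]
    [InnerProductSpace ℝ E] (hb : 0 < b) {f : ℝ → E} (hf : ContDiff ℝ 1 f)
    (hfc : HasCompactSupport f) :
    ∫ s, (1 + (s - s₀) ^ 2)⁻¹ * ‖f s‖ ^ 2 ≤
      16 * (∫ s, ‖deriv f s‖ ^ 2) + (2 + 16 / b ^ 2) * ∫ s in Icc (s₀ - b) (s₀ + b), ‖f s‖ ^ 2 := by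
  have hg : Continuous fun s => ‖f s‖ ^ 2 := hf.continuous.norm.pow 2
  have hgc : HasCompactSupport fun s => ‖f s‖ ^ 2 :=
    hfc.comp_left (g := fun z : E => ‖z‖ ^ 2) (by simp)
  have hV : Integrable fun s => (hardyPhiDeriv s₀ b s - hardyPhi s₀ b s ^ 2) * ‖f s‖ ^ 2 :=
    ((locallyIntegrable_hardyPhiDeriv hb).sub ((continuous_hardyPhi hb).pow 2).locallyIntegrable
      ).integrable_smul_right_of_hasCompactSupport hg hgc
  have hI : Integrable fun s => (Icc (s₀ - b) (s₀ + b)).indicator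
      (fun s => (2 + 16 / b ^ 2) * ‖f s‖ ^ 2) s :=
    ((hg.integrable_of_hasCompactSupport hgc).const_mul _).indicator measurableSet_Icc
  have hS : ({s₀ - b, s₀ + b} : Set ℝ).Countable := (toFinite _).countable
  calc ∫ s, (1 + (s - s₀) ^ 2)⁻¹ * ‖f s‖ ^ 2
      ≤ ∫ s, (16 * ((hardyPhiDeriv s₀ b s - hardyPhi s₀ b s ^ 2) * ‖f s‖ ^ 2)
          + (Icc (s₀ - b) (s₀ + b)).indicator (fun s => (2 + 16 / b ^ 2) * ‖f s‖ ^ 2) s) := by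
        refine integral_mono ?_ ((hV.const_mul 16).add hI) fun s => ?_
        · have hw : Continuous fun s : ℝ => (1 + (s - s₀) ^ 2)⁻¹ :=
            .inv₀ (by fun_prop) fun s => by positivity
          exact hw.locallyIntegrable.integrable_smul_right_of_hasCompactSupport hg hgc
        · have := mul_le_mul_of_nonneg_right (inv_one_add_sq_le_hardyPhi (s₀ := s₀) hb s)
            (sq_nonneg ‖f s‖)
          rw [indicator_mul_left]
          linarith
    _ = 16 * (∫ s, (hardyPhiDeriv s₀ b s - hardyPhi s₀ b s ^ 2) * ‖f s‖ ^ 2)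
          + (2 + 16 / b ^ 2) * ∫ s in Icc (s₀ - b) (s₀ + b), ‖f s‖ ^ 2 := by
        rw [integral_add (hV.const_mul 16) hI, integral_const_mul,
          integral_indicator measurableSet_Icc, integral_const_mul]
    _ ≤ _ := by
        gcongr 16 * ?_ + _
        refine integral_sub_sq_mul_norm_sq_le_integral_norm_deriv_sq hS (continuous_hardyPhi hb)
          (fun s hs => hasDerivAt_hardyPhi hb fun h => hs ?_) (locallyIntegrable_hardyPhiDeriv hb)
          hf hfc
        rw [mem_insert_iff, mem_singleton_iff]
        rcases (abs_eq hb.le).1 h with h | h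
        · right; linarith
        · left; linarith

end HardyPhi

theorem kinetic_hardy_lebesgue_general
    (a : ℝ) (s₀ b : ℝ) (hb : 0 < b) :
    ∀ ψ : ℝ → ℝ → ℂ,
      ContDiff ℝ (⊤ : ℕ∞) (fun p : ℝ × ℝ => ψ p.1 p.2) →
      HasCompactSupport (fun p : ℝ × ℝ => ψ p.1 p.2) →
      tsupport (fun p : ℝ × ℝ => ψ p.1 p.2) ⊆ univ ×ˢ Ioo (-a) a →
      (∫ s : ℝ, ∫ t in Ioo (-a) a, (1 + (s - s₀) ^ 2)⁻¹ * ‖ψ s t‖ ^ 2) ≤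
        16 * (∫ s : ℝ, ∫ t in Ioo (-a) a, ‖deriv (fun x => ψ x t) s‖ ^ 2) +
          (2 + 16 / b ^ 2) *
            (∫ s in Icc (s₀ - b) (s₀ + b), ∫ t in Ioo (-a) a, ‖ψ s t‖ ^ 2) := by
  intro ψ hψ hψc _
  set Ψ : ℝ × ℝ → ℂ := fun p => ψ p.1 p.2
  have hΨ : ContDiff ℝ 1 Ψ := hψ.of_le (by exact_mod_cast le_top)
  have hint : ∀ {g : ℝ × ℝ → ℝ}, Continuous g → (∀ p, Ψ p = 0 → fderiv ℝ Ψ p = 0 → g p = 0) →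
      ∀ {μ : Measure ℝ}, μ ≤ volume → Integrable g (μ.prod (volume.restrict (Ioo (-a) a))) :=
    fun hg hg0 _ hμ => (hg.integrable_of_hasCompactSupport
      (hψc.of_forall_eq_zero_of_fderiv_eq_zero hg0)).mono_measure
      (Measure.prod_mono hμ Measure.restrict_le_self)
  have hderiv : ∀ s t, deriv (fun x => ψ x t) s = fderiv ℝ Ψ (s, t) (1, 0) := fun s t =>
    (hasDerivAt_comp_prodMk_left (hΨ.differentiable one_ne_zero _)).deriv
  have hw : Continuous fun p : ℝ × ℝ => (1 + (p.1 - s₀) ^ 2)⁻¹ :=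
    .inv₀ (by fun_prop) fun p => by positivity
  have hsq : Continuous fun p => ‖Ψ p‖ ^ 2 := hΨ.continuous.norm.pow 2
  have hdsq : Continuous fun p : ℝ × ℝ => ‖deriv (fun x => ψ x p.2) p.1‖ ^ 2 := by
    simp only [hderiv]
    exact ((hΨ.continuous_fderiv one_ne_zero).clm_apply continuous_const).norm.pow 2
  refine integral_integral_le_of_forall_slice_le
    (hint (hw.mul hsq) (fun p h₀ _ => by simp [h₀]) le_rfl)
    (hint hdsq (fun p _ h₁ => by simp [hderiv, h₁]) le_rfl)
    (hint hsq (fun p h₀ _ => by simp [h₀]) Measure.restrict_le_self) fun t =>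
    integral_inv_one_add_sq_mul_norm_sq_le hb (hΨ.comp (contDiff_id.prodMk contDiff_const))
      (hψc.comp_prodMk_left t)

/-- **Lemma (kinetic-energy Hardy estimate, Lebesgue version).** For a bounded
interval `I = [s₀ - b, s₀ + b]` with centre `s₀` and half-length `b > 0`, and
every `ψ ∈ C_c^∞(ℝ × (-a,a))`, with respect to Lebesgue measure on the strip:
`∫ ρ⁻²|ψ|² ≤ 16 ∫ |∂_s ψ|² + (2 + 16/b²) ∫ χ_I |ψ|²`,
where `ρ(s,t) = √(1+(s-s₀)²)`. -/
theorem kinetic_hardy_lebesgue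
    (a : ℝ) (ha : 0 < a) (s₀ b : ℝ) (hb : 0 < b) :
    ∀ ψ : ℝ → ℝ → ℂ,
      ContDiff ℝ (⊤ : ℕ∞) (fun p : ℝ × ℝ => ψ p.1 p.2) →
      HasCompactSupport (fun p : ℝ × ℝ => ψ p.1 p.2) →
      tsupport (fun p : ℝ × ℝ => ψ p.1 p.2) ⊆ univ ×ˢ Ioo (-a) a →
      (∫ s : ℝ, ∫ t in Ioo (-a) a, (1 + (s - s₀) ^ 2)⁻¹ * ‖ψ s t‖ ^ 2) ≤
        16 * (∫ s : ℝ, ∫ t in Ioo (-a) a, ‖deriv (fun x => ψ x t) s‖ ^ 2) +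
          (2 + 16 / b ^ 2) *
            (∫ s in Icc (s₀ - b) (s₀ + b), ∫ t in Ioo (-a) a, ‖ψ s t‖ ^ 2) :=
  kinetic_hardy_lebesgue_general a s₀ b hb
end

section
/- Let a > 0, let σ : ℝ → ℝ be bounded and continuous, let s₀ ∈ ℝ, let c > 0 and E₁ := π²/(2a)². Define ε(s) := ε₀/(1 + s²), f₋(s) := √(1 − aε(s)(2 + aε(s))/(1 + a²‖σ‖_∞²)), f₊(s) := √(1 + aε(s)(2 + aε(s))), and w(s,t) := c·min{f₊(0)^{-1}, f₋(0)}/(1 + (s − s₀)²) − E₁·(f₊(s) − f₋(s)). Then there exists ε* > 0 such that for all ε₀ ∈ [0, ε*], w(s,t) > 0 for every (s,t) ∈ ℝ × (−a,a). -/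
/-!
Write `x = aε(2 + aε)` and `D = 1 + a²‖σ‖_∞² ≥ 1`. For `0 ≤ aε₀ ≤ 1/6` the factor
`min{f₊(0)⁻¹, f₋(0)}` is at least `1/2`, while `√(1 + x) ≤ 1 + x/2` and `1 - x/D ≤ √(1 - x/D)`
give `f₊(s) - f₋(s) ≤ 3x/2 ≤ 9aε₀/(2(1 + s²))`. Since `1 + (s - s₀)² ≤ 2(1 + s₀²)(1 + s²)`,
the decay of `ε` beats the Hardy weight uniformly in `s` once `ε₀ ≲ c/(a E₁ (1 + s₀²))`.
-/

open MeasureTheory Real Set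

lemma mul_two_add_le_three_mul {u : ℝ} (hu₀ : 0 ≤ u) (hu₁ : u ≤ 1) : u * (2 + u) ≤ 3 * u := by
  nlinarith

lemma one_add_sub_sq_le (s s₀ : ℝ) : 1 + (s - s₀) ^ 2 ≤ 2 * (1 + s₀ ^ 2) * (1 + s ^ 2) := by
  nlinarith [sq_nonneg (s + s₀), sq_nonneg (s * s₀)]

lemma sqrt_one_add_sub_sqrt_one_sub_div_le {x D : ℝ} (hx : 0 ≤ x) (hD : 1 ≤ D) :
    √(1 + x) - √(1 - x / D) ≤ 3 / 2 * x := by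
  have hxD : x / D ≤ x := div_le_self hx hD
  have hplus : √(1 + x) ≤ 1 + x / 2 := sqrt_one_add_le (by linarith)
  have hminus : 1 - x / D ≤ √(1 - x / D) :=
    le_sqrt_self_iff.mpr (by linarith [div_nonneg hx (zero_le_one.trans hD)])
  linarith

lemma half_le_min_inv_sqrt_one_add_sqrt_one_sub_div {x D : ℝ} (hx₀ : 0 ≤ x) (hx : x ≤ 1 / 2)
    (hD : 1 ≤ D) : 1 / 2 ≤ min (√(1 + x))⁻¹ (√(1 - x / D)) := by
  have hxD : x / D ≤ x := div_le_self hx₀ hD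
  refine le_min ?_ ?_
  · rw [one_div]
    refine inv_anti₀ (sqrt_pos.mpr (by linarith)) ((sqrt_le_left zero_le_two).mpr ?_)
    linarith
  · rw [le_sqrt (by norm_num) (by linarith)]
    linarith

theorem weight_positive_for_small_eps_general
    (a : ℝ) (ha : 0 < a)
    (σ : ℝ → ℝ)
    (s₀ : ℝ) (c : ℝ) (hc : 0 < c) :
    ∃ εstar > (0:ℝ), ∀ ε₀ : ℝ, 0 ≤ ε₀ → ε₀ ≤ εstar →
      ∀ s : ℝ, ∀ t ∈ Ioo (-a) a,
        0 <
          c * min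
              (Real.sqrt (1 + a * ε₀ * (2 + a * ε₀)))⁻¹
              (Real.sqrt (1 - a * ε₀ * (2 + a * ε₀) /
                (1 + a ^ 2 * (⨆ x, |σ x|) ^ 2))) / (1 + (s - s₀) ^ 2) -
            (π ^ 2 / (2 * a) ^ 2) *
              (Real.sqrt (1 + a * (ε₀ / (1 + s ^ 2)) *
                  (2 + a * (ε₀ / (1 + s ^ 2)))) -
                Real.sqrt (1 - a * (ε₀ / (1 + s ^ 2)) *
                    (2 + a * (ε₀ / (1 + s ^ 2))) /
                  (1 + a ^ 2 * (⨆ x, |σ x|) ^ 2))) := by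
  set E := π ^ 2 / (2 * a) ^ 2
  set D := 1 + a ^ 2 * (⨆ x, |σ x|) ^ 2
  set K := 1 + s₀ ^ 2
  have hE : 0 < E := by positivity
  have hD : 1 ≤ D := le_add_of_nonneg_right (by positivity)
  refine ⟨min (1 / (6 * a)) (c / (19 * a * E * K)), by positivity,
    fun ε₀ hε₀ hε₀le s _ _ => ?_⟩
  have hu : a * ε₀ ≤ 1 / 6 := by
    have := (le_div_iff₀ (by positivity)).mp (hε₀le.trans (min_le_left _ _))
    linarith
  have hεc : ε₀ * (19 * a * E * K) ≤ c :=
    (le_div_iff₀ (by positivity)).mp (hε₀le.trans (min_le_right _ _))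
  set q := 1 + s ^ 2
  have hq : 0 < q := by positivity
  have huq : a * (ε₀ / q) ≤ a * ε₀ :=
    mul_le_mul_of_nonneg_left (div_le_self hε₀ (le_add_of_nonneg_right (sq_nonneg s))) ha.le
  have huq₀ : 0 ≤ a * (ε₀ / q) := by positivity
  have hmin := half_le_min_inv_sqrt_one_add_sqrt_one_sub_div (D := D)
    (by positivity : 0 ≤ a * ε₀ * (2 + a * ε₀)) (by nlinarith) hD
  have hdiff := (sqrt_one_add_sub_sqrt_one_sub_div_le (by positivity) hD).trans
    (mul_le_mul_of_nonneg_left (mul_two_add_le_three_mul huq₀ (by linarith)) (by norm_num))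
  rw [sub_pos, lt_div_iff₀ (by positivity)]
  calc _ ≤ E * (3 / 2 * (3 * (a * (ε₀ / q)))) * (2 * K * q) := by
        gcongr
        exact one_add_sub_sq_le s s₀
    _ = 9 / 19 * (ε₀ * (19 * a * E * K)) := by field_simp; ring
    _ < c * (1 / 2) := by linarith
    _ ≤ _ := mul_le_mul_of_nonneg_left hmin hc.le

/-- **Positivity of the weight `w` for small `ε₀`.** With
`ε(s) = ε₀/(1+s²)`, `f₋(s) = √(1 - aε(s)(2+aε(s))/(1+a²‖σ‖_∞²))`,
`f₊(s) = √(1 + aε(s)(2+aε(s)))` and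
`w(s,t) = c·min{f₊(0)⁻¹, f₋(0)}/(1+(s-s₀)²) - E₁(f₊(s) - f₋(s))`,
there exists `ε* > 0` such that for all `ε₀ ∈ [0, ε*]` the weight `w` is
positive everywhere on `ℝ × (-a,a)`. -/
theorem weight_positive_for_small_eps
    (a : ℝ) (ha : 0 < a)
    (σ : ℝ → ℝ) (hσcont : Continuous σ) (hσbdd : ∃ M, ∀ s, |σ s| ≤ M)
    (s₀ : ℝ) (c : ℝ) (hc : 0 < c) :
    ∃ εstar > (0:ℝ), ∀ ε₀ : ℝ, 0 ≤ ε₀ → ε₀ ≤ εstar →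
      ∀ s : ℝ, ∀ t ∈ Ioo (-a) a,
        0 <
          c * min
              (Real.sqrt (1 + a * ε₀ * (2 + a * ε₀)))⁻¹
              (Real.sqrt (1 - a * ε₀ * (2 + a * ε₀) /
                (1 + a ^ 2 * (⨆ x, |σ x|) ^ 2))) / (1 + (s - s₀) ^ 2) -
            (π ^ 2 / (2 * a) ^ 2) *
              (Real.sqrt (1 + a * (ε₀ / (1 + s ^ 2)) *
                  (2 + a * (ε₀ / (1 + s ^ 2)))) -
                Real.sqrt (1 - a * (ε₀ / (1 + s ^ 2)) *
                    (2 + a * (ε₀ / (1 + s ^ 2))) /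
                  (1 + a ^ 2 * (⨆ x, |σ x|) ^ 2))) :=
  weight_positive_for_small_eps_general a ha σ s₀ c hc
end
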